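/- arXiv:0906.1780 — 2 statements merged into one kernel-verified Lean document; each statement's English description precedes it below -/
import Mathlib

section
/- Let p ∈ OFS with min(p) ≠ gcd(p). Then the graph G(p, fw(p) − 1) has more than gcd(p) connected components. -/
/-- `OFS p`: `p` is a strictly increasing nonempty finite sequence of positive integers. -/
def OFS (p : List ℕ) : Prop := p ≠ [] ∧ p.Pairwise (· < ·) ∧ ∀ x ∈ p, 0 < x

/-- The reduction operation `R`. -/
def R : List ℕ → List ℕ
  | [] => []
  | [a] => [a]
  | a :: b :: rest => (((b :: rest).map (fun x => x - a)).insert a).mergeSort (· ≤ ·)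

/-- `max(p)` -/
def maxL (p : List ℕ) : ℕ := p.foldr max 0

/-- `gcd(p)` -/
def gcdL (p : List ℕ) : ℕ := p.foldr Nat.gcd 0

/-- Fuel-based auxiliary for `f`; `maxL p + 1` fuel always suffices since
`maxL` strictly decreases under `R` for lists of length `> 1`. -/
def faux : ℕ → List ℕ → ℕ
  | _, [] => 0
  | _, [a] => a
  | 0, _ => 0
  | fuel+1, p => p.headI + faux fuel (R p)

/-- The function `f` of Castelli–Mignosi–Restivo: `f p = p₁` if `|p| = 1`,
and `f p = p₁ + f (R p)` otherwise. -/
def f (p : List ℕ) : ℕ := faux (maxL p + 1) p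

/-- The function `fw` of Tijdeman–Zamboni. -/
def fw (p : List ℕ) : ℕ :=
  if h : 1 < p.length ∧ gcdL p.dropLast = gcdL p ∧ f p.dropLast ≤ maxL p
  then fw p.dropLast
  else f p
termination_by p.length
decreasing_by
  simp only [List.length_dropLast]
  omega

/-- The Fine–Wilf graph `G(p,k)` on vertex set `{1,…,k}` (represented by `Fin k`,
with `v : Fin k` standing for the integer `v+1`); `i` and `j` are adjacent iff
`|i - j|` is an entry of `p`. -/
def G (p : List ℕ) (k : ℕ) : SimpleGraph (Fin k) where
  Adj i j := i ≠ j ∧ (((j : ℕ) - (i : ℕ)) ∈ p ∨ ((i : ℕ) - (j : ℕ)) ∈ p)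
  symm := by
    constructor
    intro i j h
    exact ⟨h.1.symm, h.2.symm⟩
  loopless := by
    constructor
    intro i h
    exact h.1 rfl

/-- `p` is trim. -/
def Trim (p : List ℕ) : Prop :=
  p.length = 1 ∨ (1 < p.length ∧
    (gcdL p ≠ gcdL p.dropLast ∨ (gcdL p = gcdL p.dropLast ∧ maxL p < f p.dropLast)))

-- basic lemmas
theorem mem_le_maxL {p : List ℕ} {x : ℕ} (h : x ∈ p) : x ≤ maxL p := by
  induction p with
  | nil => simp at h
  | cons a t ih =>
    rcases List.mem_cons.1 h with rfl | h'
    · exact le_max_left _ _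
    · exact le_trans (ih h') (le_max_right _ _)

theorem maxL_mem {p : List ℕ} (h : p ≠ []) (h2 : ∀ x ∈ p, 0 < x) : maxL p ∈ p := by
  induction p with
  | nil => simp at h
  | cons a t ih =>
    rcases eq_or_ne t [] with rfl | ht
    · show max a (maxL []) ∈ _
      have := h2 a (by simp)
      simp [maxL]
    · have : maxL t ∈ t := ih ht (fun x hx => h2 x (by simp [hx]))
      show max a (maxL t) ∈ _
      rcases le_total a (maxL t) with h' | h'
      · rw [max_eq_right h']; exact List.mem_cons_of_mem _ this
      · rw [max_eq_left h']; exact List.mem_cons_self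

theorem maxL_lt_of_forall {p : List ℕ} {m : ℕ} (hm : 0 < m) (h : ∀ x ∈ p, x < m) :
    maxL p < m := by
  induction p with
  | nil => simpa [maxL]
  | cons a t ih =>
    show max a (maxL t) < m
    exact max_lt (h a (by simp)) (ih (fun x hx => h x (by simp [hx])))

theorem headI_le_mem {p : List ℕ} (hs : p.Pairwise (· < ·)) : ∀ x ∈ p, p.headI ≤ x := by
  intro x hx
  cases p with
  | nil => simp at hx
  | cons a t =>
    rcases List.mem_cons.1 hx with rfl | h'
    · simp
    · exact le_of_lt ((List.pairwise_cons.1 hs).1 x h')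

theorem headI_mem {p : List ℕ} (h : p ≠ []) : p.headI ∈ p := by
  cases p with
  | nil => simp at h
  | cons a t => simp

theorem gcdL_dvd {p : List ℕ} : ∀ x ∈ p, gcdL p ∣ x := by
  induction p with
  | nil => simp
  | cons a t ih =>
    intro x hx
    rcases List.mem_cons.1 hx with rfl | h'
    · exact Nat.gcd_dvd_left _ _
    · exact dvd_trans (Nat.gcd_dvd_right a (gcdL t)) (ih x h')

theorem dvd_gcdL {p : List ℕ} {c : ℕ} (h : ∀ x ∈ p, c ∣ x) : c ∣ gcdL p := by
  induction p with
  | nil => simp [gcdL]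
  | cons a t ih =>
    exact Nat.dvd_gcd (h a (by simp)) (ih (fun x hx => h x (by simp [hx])))

theorem gcdL_pos {p : List ℕ} (hp : OFS p) : 0 < gcdL p := by
  rcases Nat.eq_zero_or_pos (gcdL p) with h | h
  · exfalso
    have := gcdL_dvd p.headI (headI_mem hp.1)
    rw [h] at this
    have h2 := hp.2.2 p.headI (headI_mem hp.1)
    omega
  · exact h

theorem ofs_nodup {p : List ℕ} (hp : OFS p) : p.Nodup := hp.2.1.nodup

-- getLast / dropLast lemmas
theorem le_getLast_of_mem {p : List ℕ} (hs : p.Pairwise (· < ·)) (h : p ≠ []) :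
    ∀ x ∈ p, x ≤ p.getLast h := by
  induction p with
  | nil => simp at h
  | cons a t ih =>
    intro x hx
    rcases eq_or_ne t [] with rfl | ht
    · simp at hx
      simp [hx]
    · rw [List.getLast_cons ht]
      rcases List.mem_cons.1 hx with rfl | h'
      · exact le_of_lt ((List.pairwise_cons.1 hs).1 _ (List.getLast_mem ht))
      · exact ih (List.pairwise_cons.1 hs).2 ht x h'

theorem maxL_eq_getLast {p : List ℕ} (hp : OFS p) (h : p ≠ []) :
    maxL p = p.getLast h := by
  have hg : p.getLast h ∈ p := List.getLast_mem h
  have h1 : p.getLast h ≤ maxL p := mem_le_maxL hg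
  have h2 : maxL p ≤ p.getLast h :=
    le_getLast_of_mem hp.2.1 h _ (maxL_mem h hp.2.2)
  omega

theorem mem_dropLast_iff {p : List ℕ} (hp : OFS p) (h : p ≠ []) {x : ℕ} :
    x ∈ p.dropLast ↔ x ∈ p ∧ x ≠ p.getLast h := by
  have hd := ofs_nodup hp
  have hsplit : x ∈ p ↔ x ∈ p.dropLast ∨ x = p.getLast h := by
    conv_lhs => rw [← List.dropLast_append_getLast h]
    simp
  have hnl : p.getLast h ∉ p.dropLast := by
    intro hmem
    have hd2 := hd
    rw [← List.dropLast_append_getLast h] at hd2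
    exact (List.disjoint_of_nodup_append hd2) hmem (by simp)
  constructor
  · intro hx
    refine ⟨hsplit.2 (Or.inl hx), ?_⟩
    rintro rfl
    exact hnl hx
  · rintro ⟨hx, hne⟩
    rcases hsplit.1 hx with h' | h'
    · exact h'
    · exact absurd h' hne

theorem OFS_dropLast {p : List ℕ} (hp : OFS p) (h : 1 < p.length) : OFS p.dropLast := by
  refine ⟨?_, ?_, ?_⟩
  · have := p.length_dropLast
    intro he
    rw [he] at this
    simp at this
    omega
  · exact hp.2.1.sublist (List.dropLast_sublist p)
  · intro x hx
    exact hp.2.2 x ((List.dropLast_sublist p).mem hx)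

theorem headI_dropLast {p : List ℕ} (h : 1 < p.length) : p.dropLast.headI = p.headI := by
  cases p with
  | nil => simp at h
  | cons a t =>
    cases t with
    | nil => simp at h
    | cons b s => simp

theorem maxL_dropLast_lt {p : List ℕ} (hp : OFS p) (h : 1 < p.length) :
    maxL p.dropLast < maxL p := by
  have hne : p ≠ [] := by intro he; rw [he] at h; simp at h
  have hdne : p.dropLast ≠ [] := (OFS_dropLast hp h).1
  have h1 : maxL p.dropLast ∈ p.dropLast := maxL_mem hdne (OFS_dropLast hp h).2.2
  rw [mem_dropLast_iff hp hne] at h1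
  have h2 := mem_le_maxL h1.1
  rw [maxL_eq_getLast hp hne] at h2 ⊢
  rcases lt_or_eq_of_le h2 with h3 | h3
  · exact h3
  · exact absurd h3 h1.2

theorem getLast_mem_tail {p : List ℕ} (hp : OFS p) (h : 1 < p.length) :
    p.getLast (by intro he; rw [he] at h; simp at h) ∈ p.tail := by
  cases p with
  | nil => simp at h
  | cons a t =>
    cases t with
    | nil => simp at h
    | cons b s =>
      rw [List.getLast_cons (by simp)]
      exact List.getLast_mem _

theorem mem_tail_iff {p : List ℕ} (hp : OFS p) (h : p ≠ []) {x : ℕ} :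
    x ∈ p.tail ↔ x ∈ p ∧ x ≠ p.headI := by
  cases p with
  | nil => simp at h
  | cons a t =>
    have hd := ofs_nodup hp
    simp only [List.tail_cons, List.headI_cons, List.mem_cons]
    constructor
    · intro hx
      refine ⟨Or.inr hx, ?_⟩
      rintro rfl
      exact (List.nodup_cons.1 hd).1 hx
    · rintro ⟨hx, hne⟩
      rcases hx with rfl | hx
      · exact absurd rfl hne
      · exact hx

theorem headI_lt_mem_tail {p : List ℕ} (hp : OFS p) {x : ℕ} (hx : x ∈ p.tail) :
    p.headI < x := by
  cases p with
  | nil => simp at hx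
  | cons a t => exact (List.pairwise_cons.1 hp.2.1).1 x hx

-- R lemmas
instance : IsAntisymm ℕ (· < ·) := ⟨fun a b h h' => absurd h (not_lt.2 h'.le)⟩

theorem ofs_eq_of_mem_iff {u v : List ℕ} (hu : OFS u) (hv : OFS v)
    (h : ∀ x, x ∈ u ↔ x ∈ v) : u = v := by
  have hperm : List.Perm u v := by
    rw [List.perm_ext_iff_of_nodup (ofs_nodup hu) (ofs_nodup hv)]
    exact h
  exact hperm.eq_of_pairwise (fun a b _ _ h1 h2 => absurd h1 (not_lt.2 h2.le)) hu.2.1 hv.2.1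

theorem mem_R_iff {p : List ℕ} (h : p ≠ []) {x : ℕ} :
    x ∈ R p ↔ x = p.headI ∨ ∃ y ∈ p.tail, x = y - p.headI := by
  cases p with
  | nil => simp at h
  | cons a t =>
    cases t with
    | nil => simp [R]
    | cons b s =>
      show x ∈ ((((b :: s).map (fun y => y - a)).insert a).mergeSort (· ≤ ·)) ↔ _
      rw [List.mem_mergeSort, List.mem_insert_iff, List.mem_map]
      constructor
      · rintro (rfl | ⟨y, hy, rfl⟩)
        · exact Or.inl rfl
        · exact Or.inr ⟨y, hy, rfl⟩
      · rintro (rfl | ⟨y, hy, rfl⟩)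
        · exact Or.inl rfl
        · exact Or.inr ⟨y, hy, rfl⟩

theorem OFS_R {p : List ℕ} (hp : OFS p) : OFS (R p) := by
  cases p with
  | nil => exact absurd rfl hp.1
  | cons a t =>
    cases t with
    | nil => exact hp
    | cons b s =>
      have hpos : ∀ x ∈ R (a :: b :: s), 0 < x := by
        intro x hx
        rw [mem_R_iff (by simp)] at hx
        rcases hx with rfl | ⟨y, hy, rfl⟩
        · exact hp.2.2 _ (by simp)
        · have := headI_lt_mem_tail hp hy
          simp at this ⊢
          omega
      have hnd : (((b :: s).map (fun y => y - a)).insert a).Nodup := by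
        apply List.Nodup.insert
        refine List.Nodup.map_on ?_ (ofs_nodup hp).of_cons
        intro x hx y hy hxy
        have hax : a < x := headI_lt_mem_tail hp hx
        have hay : a < y := headI_lt_mem_tail hp hy
        omega
      have hnd2 : (R (a :: b :: s)).Nodup := by
        show ((((b :: s).map (fun y => y - a)).insert a).mergeSort (· ≤ ·)).Nodup
        exact (List.mergeSort_perm _ _).nodup_iff.2 hnd
      have hsorted : (R (a :: b :: s)).Pairwise (· ≤ ·) := by
        show (List.mergeSort _ _).Pairwise _
        exact List.pairwise_mergeSort' (· ≤ ·) _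
      refine ⟨?_, ?_, hpos⟩
      · intro he
        have : a ∈ R (a :: b :: s) := (mem_R_iff (by simp)).2 (Or.inl rfl)
        rw [he] at this
        simp at this
      · rw [List.pairwise_iff_get] at hsorted ⊢
        intro i j hij
        have h1 := hsorted i j hij
        have h2 : (R (a :: b :: s)).get i ≠ (R (a :: b :: s)).get j := by
          intro he
          rw [List.Nodup, List.pairwise_iff_get] at hnd2
          exact hnd2 i j hij he
        omega

theorem gcdL_R {p : List ℕ} (hp : OFS p) (h : 1 < p.length) : gcdL (R p) = gcdL p := by
  have hne : p ≠ [] := hp.1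
  apply Nat.dvd_antisymm
  · apply dvd_gcdL
    intro x hx
    have h1 : gcdL (R p) ∣ p.headI := gcdL_dvd _ ((mem_R_iff hne).2 (Or.inl rfl))
    rcases eq_or_ne x p.headI with rfl | hxh
    · exact h1
    · have ht : x ∈ p.tail := (mem_tail_iff hp hne).2 ⟨hx, hxh⟩
      have h2 : gcdL (R p) ∣ x - p.headI := gcdL_dvd _ ((mem_R_iff hne).2 (Or.inr ⟨x, ht, rfl⟩))
      have h3 : p.headI ≤ x := headI_le_mem hp.2.1 x hx
      have := Nat.dvd_add h2 h1
      rwa [Nat.sub_add_cancel h3] at this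
  · apply dvd_gcdL
    intro x hx
    rw [mem_R_iff hne] at hx
    rcases hx with rfl | ⟨y, hy, rfl⟩
    · exact gcdL_dvd _ (headI_mem hne)
    · exact Nat.dvd_sub (gcdL_dvd _ (List.mem_of_mem_tail hy)) (gcdL_dvd _ (headI_mem hne))

theorem headI_mem_R {p : List ℕ} (h : p ≠ []) : p.headI ∈ R p :=
  (mem_R_iff h).2 (Or.inl rfl)

theorem maxL_sub_headI_mem_R {p : List ℕ} (hp : OFS p) (h : 1 < p.length) :
    maxL p - p.headI ∈ R p := by
  have hne : p ≠ [] := hp.1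
  refine (mem_R_iff hne).2 (Or.inr ⟨maxL p, ?_, rfl⟩)
  rw [maxL_eq_getLast hp hne]
  exact getLast_mem_tail hp h

theorem headI_lt_maxL {p : List ℕ} (hp : OFS p) (h : 1 < p.length) :
    p.headI < maxL p := by
  have hne : p ≠ [] := hp.1
  have hm : maxL p ∈ p.tail := by
    rw [maxL_eq_getLast hp hne]
    exact getLast_mem_tail hp h
  exact headI_lt_mem_tail hp hm

theorem maxL_R {p : List ℕ} (hp : OFS p) (h : 1 < p.length) :
    maxL (R p) = max p.headI (maxL p - p.headI) := by
  have hne : p ≠ [] := hp.1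
  apply le_antisymm
  · apply Nat.le_of_lt_succ
    apply maxL_lt_of_forall (by omega)
    intro x hx
    rw [mem_R_iff hne] at hx
    rcases hx with rfl | ⟨y, hy, rfl⟩
    · have := le_max_left p.headI (maxL p - p.headI); omega
    · have h1 : y ≤ maxL p := mem_le_maxL (List.mem_of_mem_tail hy)
      have := le_max_right p.headI (maxL p - p.headI)
      omega
  · apply max_le
    · exact mem_le_maxL (headI_mem_R hne)
    · exact mem_le_maxL (maxL_sub_headI_mem_R hp h)

theorem maxL_R_lt {p : List ℕ} (hp : OFS p) (h : 1 < p.length) :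
    maxL (R p) < maxL p := by
  rw [maxL_R hp h]
  have h1 := headI_lt_maxL hp h
  have h2 := hp.2.2 _ (headI_mem hp.1)
  omega

theorem one_lt_length_of_two_mem {l : List ℕ} {x y : ℕ} (hx : x ∈ l) (hy : y ∈ l)
    (hne : x ≠ y) : 1 < l.length := by
  cases l with
  | nil => simp at hx
  | cons a t =>
    cases t with
    | nil => simp at hx hy; omega
    | cons b s => simp

-- f lemmas
theorem f_singleton (a : ℕ) : f [a] = a := rfl

theorem faux_stable : ∀ (n : ℕ) {p : List ℕ}, OFS p → maxL p < n → faux n p = f p := by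
  intro n
  induction n using Nat.strong_induction_on with
  | _ n ih =>
    intro p hp h
    cases n with
    | zero => exact absurd h (Nat.not_lt_zero _)
    | succ n =>
      cases p with
      | nil => exact absurd rfl hp.1
      | cons a t =>
        cases t with
        | nil => rfl
        | cons b s =>
          have h2 : 1 < (a :: b :: s).length := by simp
          have hR := OFS_R hp
          have hRlt := maxL_R_lt hp h2
          have e1 : faux (n+1) (a :: b :: s) = a + faux n (R (a :: b :: s)) := rfl
          have e2 : f (a :: b :: s) = a + faux (maxL (a :: b :: s)) (R (a :: b :: s)) := rfl
          rw [e1, e2, ih n (by omega) hR (by omega),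
            ih (maxL (a :: b :: s)) (by omega) hR (by omega)]

theorem f_cons {p : List ℕ} (hp : OFS p) (h : 1 < p.length) :
    f p = p.headI + f (R p) := by
  cases p with
  | nil => exact absurd rfl hp.1
  | cons a t =>
    cases t with
    | nil => simp at h
    | cons b s =>
      have e2 : f (a :: b :: s) = a + faux (maxL (a :: b :: s)) (R (a :: b :: s)) := rfl
      rw [e2, faux_stable _ (OFS_R hp) (maxL_R_lt hp (by simp))]
      rfl

theorem maxL_le_f_aux : ∀ (N : ℕ), ∀ {p : List ℕ}, OFS p → maxL p ≤ N → maxL p ≤ f p := by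
  intro N
  induction N using Nat.strong_induction_on with
  | _ N ih =>
    intro p hp hN
    rcases eq_or_lt_of_le (Nat.one_le_iff_ne_zero.2 (by
      intro h0; exact hp.1 (List.length_eq_zero_iff.1 h0))) with h | h
    · obtain ⟨a, rfl⟩ := List.length_eq_one_iff.1 h.symm
      have : maxL [a] = a := by simp [maxL]
      rw [this, f_singleton]
    · rw [f_cons hp h]
      have hRlt := maxL_R_lt hp h
      have hmp : 0 < maxL p := by
        have h2 := hp.2.2 _ (headI_mem hp.1)
        have h3 := mem_le_maxL (headI_mem hp.1)
        omega
      have h1 : maxL (R p) ≤ f (R p) := by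
        rcases Nat.eq_zero_or_pos N with rfl | hNpos
        · omega
        · exact ih (N - 1) (by omega) (OFS_R hp) (by omega)
      have h2 : maxL p - p.headI ≤ maxL (R p) := mem_le_maxL (maxL_sub_headI_mem_R hp h)
      have h3 := headI_lt_maxL hp h
      omega

theorem maxL_le_f {p : List ℕ} (hp : OFS p) : maxL p ≤ f p :=
  maxL_le_f_aux (maxL p) hp le_rfl

theorem f_pos {p : List ℕ} (hp : OFS p) : 0 < f p := by
  have h1 := maxL_le_f hp
  have h2 := hp.2.2 _ (headI_mem hp.1)
  have h3 := mem_le_maxL (headI_mem hp.1)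
  omega

theorem headI_le_f {p : List ℕ} (hp : OFS p) : p.headI ≤ f p :=
  le_trans (mem_le_maxL (headI_mem hp.1)) (maxL_le_f hp)

theorem two_headI_le_f {p : List ℕ} (hp : OFS p) (h : 1 < p.length) :
    2 * p.headI ≤ f p := by
  rw [f_cons hp h]
  have h1 : p.headI ≤ maxL (R p) := mem_le_maxL (headI_mem_R hp.1)
  have h2 := maxL_le_f (OFS_R hp)
  omega

theorem headI_eq_of_mem_le {u : List ℕ} (hu : OFS u) {x : ℕ} (hx : x ∈ u)
    (hle : ∀ y ∈ u, x ≤ y) : u.headI = x :=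
  le_antisymm (headI_le_mem hu.2.1 x hx) (hle _ (headI_mem hu.1))

theorem dvd_le_mem {u : List ℕ} (hu : OFS u) {c : ℕ} (hc : 0 < c)
    (hdvd : ∀ y ∈ u, c ∣ y) : ∀ y ∈ u, c ≤ y := by
  intro y hy
  have h1 := hdvd y hy
  have h2 := hu.2.2 y hy
  exact Nat.le_of_dvd h2 h1

theorem f_eq_maxL_aux : ∀ (N : ℕ), ∀ {p : List ℕ}, OFS p → maxL p ≤ N →
    p.headI = gcdL p → f p = maxL p := by
  intro N
  induction N using Nat.strong_induction_on with
  | _ N ih =>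
    intro p hp hN hhg
    rcases eq_or_lt_of_le (Nat.one_le_iff_ne_zero.2 (by
      intro h0; exact hp.1 (List.length_eq_zero_iff.1 h0))) with h | h
    · obtain ⟨a, rfl⟩ := List.length_eq_one_iff.1 h.symm
      have : maxL [a] = a := by simp [maxL]
      rw [this, f_singleton]
    · set d := gcdL p with hd
      have hdpos : 0 < d := gcdL_pos hp
      have hR := OFS_R hp
      have hgR : gcdL (R p) = d := gcdL_R hp h
      have hdvdR : ∀ y ∈ R p, d ∣ y := by
        intro y hy
        rw [← hgR]
        exact gcdL_dvd y hy
      have hdmem : d ∈ R p := by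
        rw [← hhg]
        exact headI_mem_R hp.1
      have hheadR : (R p).headI = d :=
        headI_eq_of_mem_le hR hdmem (dvd_le_mem hR hdpos hdvdR)
      have hRlt := maxL_R_lt hp h
      have hfR : f (R p) = maxL (R p) :=
        ih (N - 1) (by omega) hR (by omega) (by rw [hheadR, hgR])
      have hmd : d ∣ maxL p := gcdL_dvd _ (maxL_mem hp.1 hp.2.2)
      have hdlt : d < maxL p := by rw [← hhg]; exact headI_lt_maxL hp h
      have h2d : 2 * d ≤ maxL p := by
        obtain ⟨c, hc⟩ := hmd
        have hc0 : c ≠ 0 := by rintro rfl; simp at hc; omega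
        have hc1 : c ≠ 1 := by rintro rfl; simp at hc; omega
        have h2c : 2 ≤ c := by omega
        have := Nat.mul_le_mul_left d h2c
        omega
      rw [f_cons hp h, hhg, hfR, maxL_R hp h, hhg]
      omega

theorem f_eq_maxL_of_headI_eq_gcd {p : List ℕ} (hp : OFS p) (h : p.headI = gcdL p) :
    f p = maxL p := f_eq_maxL_aux (maxL p) hp le_rfl h

-- structural equalities
theorem getLast_eq_maxL' {p : List ℕ} (hp : OFS p) (h : p ≠ []) :
    p.getLast h = maxL p := (maxL_eq_getLast hp h).symm

theorem mem_tail_dropLast {p : List ℕ} (hp : OFS p) (h : 1 < p.length) {x : ℕ} :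
    x ∈ p.dropLast.tail ↔ x ∈ p.tail ∧ x ≠ maxL p := by
  have hne : p ≠ [] := hp.1
  have hd' := OFS_dropLast hp h
  have hdne : p.dropLast ≠ [] := hd'.1
  rw [mem_tail_iff hd' hdne, mem_dropLast_iff hp hne, mem_tail_iff hp hne,
    headI_dropLast h, ← maxL_eq_getLast hp hne]
  tauto

/-- when `maxL p > 2 * headI p` (and `1 < length`), `dropLast (R p) = R (dropLast p)`. -/
theorem dropLast_R_eq {p : List ℕ} (hp : OFS p) (h : 1 < p.length)
    (hm : 2 * p.headI < maxL p) : (R p).dropLast = R p.dropLast := by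
  have hne : p ≠ [] := hp.1
  have hR := OFS_R hp
  have hRne : R p ≠ [] := hR.1
  have hd' := OFS_dropLast hp h
  have hdne : p.dropLast ≠ [] := hd'.1
  have ha : p.headI ∈ p := headI_mem hne
  have hapos := hp.2.2 _ ha
  -- maxL (R p) = maxL p - headI
  have hmR : maxL (R p) = maxL p - p.headI := by
    rw [maxL_R hp h]; omega
  have hRlen : 1 < (R p).length := by
    refine one_lt_length_of_two_mem (headI_mem_R hne) (maxL_sub_headI_mem_R hp h) ?_
    omega
  apply ofs_eq_of_mem_iff (OFS_dropLast hR hRlen) (OFS_R hd')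
  intro x
  rw [mem_dropLast_iff hR hRne, ← maxL_eq_getLast hR hRne, mem_R_iff hne,
    mem_R_iff hdne, headI_dropLast h, hmR]
  constructor
  · rintro ⟨rfl | ⟨y, hy, rfl⟩, hne2⟩
    · exact Or.inl rfl
    · right
      refine ⟨y, ?_, rfl⟩
      rw [mem_tail_dropLast hp h]
      refine ⟨hy, ?_⟩
      intro he
      rw [he] at hne2
      exact hne2 rfl
  · rintro (rfl | ⟨y, hy, rfl⟩)
    · exact ⟨Or.inl rfl, by omega⟩
    · rw [mem_tail_dropLast hp h] at hy
      have hylt : y < maxL p := lt_of_le_of_ne (mem_le_maxL (List.mem_of_mem_tail hy.1)) hy.2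
      have hay : p.headI < y := headI_lt_mem_tail hp hy.1
      exact ⟨Or.inr ⟨y, hy.1, rfl⟩, by omega⟩

/-- when `maxL p = 2 * headI p`, `R p = R (dropLast p)`. -/
theorem R_eq_R_dropLast {p : List ℕ} (hp : OFS p) (h : 1 < p.length)
    (hm : maxL p = 2 * p.headI) : R p = R p.dropLast := by
  have hne : p ≠ [] := hp.1
  have hd' := OFS_dropLast hp h
  have hdne : p.dropLast ≠ [] := hd'.1
  apply ofs_eq_of_mem_iff (OFS_R hp) (OFS_R hd')
  intro x
  rw [mem_R_iff hne, mem_R_iff hdne, headI_dropLast h]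
  constructor
  · rintro (rfl | ⟨y, hy, rfl⟩)
    · exact Or.inl rfl
    · rcases eq_or_ne y (maxL p) with rfl | hymax
      · left; omega
      · right
        exact ⟨y, (mem_tail_dropLast hp h).2 ⟨hy, hymax⟩, rfl⟩
  · rintro (rfl | ⟨y, hy, rfl⟩)
    · exact Or.inl rfl
    · rw [mem_tail_dropLast hp h] at hy
      exact Or.inr ⟨y, hy.1, rfl⟩

theorem f_le_maxL_aux : ∀ (N : ℕ), ∀ {u : List ℕ}, OFS u → maxL u ≤ N → 1 < u.length →
    gcdL u.dropLast = gcdL u → f u.dropLast ≤ maxL u → f u ≤ maxL u := by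
  intro N
  induction N using Nat.strong_induction_on with
  | _ N ih =>
    intro u hu hN hlen hg hf
    set u' := u.dropLast with hu'def
    have hu'ofs : OFS u' := OFS_dropLast hu hlen
    have hne : u ≠ [] := hu.1
    have hu'ne : u' ≠ [] := hu'ofs.1
    have hhead : u'.headI = u.headI := headI_dropLast hlen
    set a := u.headI with hadef
    have hapos : 0 < a := hu.2.2 _ (headI_mem hne)
    set m := maxL u with hmdef
    rcases eq_or_lt_of_le (Nat.one_le_iff_ne_zero.2 (by
      intro h0; exact hu'ne (List.length_eq_zero_iff.1 h0))) with hl1 | hl1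
    · -- u' is a singleton [a]
      obtain ⟨b, hb⟩ := List.length_eq_one_iff.1 hl1.symm
      have hba : b = a := by rw [← hhead, hb]; rfl
      have : gcdL u' = a := by rw [hb, hba]; show Nat.gcd a 0 = a; simp
      have hag : u.headI = gcdL u := by rw [← hg, this]
      rw [f_eq_maxL_of_headI_eq_gcd hu hag]
    · -- u' has length ≥ 2
      have hfu' : f u' = u.headI + f (R u') := by
        rw [f_cons hu'ofs hl1, hhead]
      have h2a : 2 * a ≤ f u' := by
        have := two_headI_le_f hu'ofs hl1
        rw [hhead] at this
        omega
      rcases lt_trichotomy m (2 * a) with hma | hma | hma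
      · omega
      · -- m = 2a
        have hRR : R u = R u' := R_eq_R_dropLast hu hlen (by omega)
        rw [f_cons hu hlen, hRR]
        omega
      · -- m > 2a
        have hdR : (R u).dropLast = R u' := dropLast_R_eq hu hlen (by omega)
        have hmR : maxL (R u) = m - a := by
          rw [maxL_R hu hlen]; omega
        have hRofs := OFS_R hu
        have hRlen : 1 < (R u).length := by
          refine one_lt_length_of_two_mem (headI_mem_R hne) (maxL_sub_headI_mem_R hu hlen) ?_
          omega
        have hgR : gcdL (R u).dropLast = gcdL (R u) := by
          rw [hdR, gcdL_R hu'ofs hl1, hg, gcdL_R hu hlen]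
        have hfR : f (R u).dropLast ≤ maxL (R u) := by
          rw [hdR, hmR]
          omega
        have hconc : f (R u) ≤ maxL (R u) :=
          ih (m - 1) (by omega) hRofs (by rw [hmR]; omega) hRlen hgR hfR
        rw [f_cons hu hlen]
        omega

theorem f_le_maxL_of_nontrim {u : List ℕ} (hu : OFS u) (hlen : 1 < u.length)
    (hg : gcdL u.dropLast = gcdL u) (hf : f u.dropLast ≤ maxL u) : f u ≤ maxL u :=
  f_le_maxL_aux (maxL u) hu le_rfl hlen hg hf

theorem key_head {q : List ℕ} (hq : OFS q) (hlen : 1 < q.length) (htrim : Trim q)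
    (hhg : q.headI ≠ gcdL q) (hfR : q.headI < f (R q)) :
    (R q).headI ≠ gcdL (R q) := by
  set d := gcdL q with hddef
  set a := q.headI with hadef
  set m := maxL q with hmdef
  have hne : q ≠ [] := hq.1
  have hdpos : 0 < d := gcdL_pos hq
  have hda : d ∣ a := gcdL_dvd _ (headI_mem hne)
  have hdlta : d < a := lt_of_le_of_ne (Nat.le_of_dvd (hq.2.2 _ (headI_mem hne)) hda)
    (Ne.symm hhg)
  have hgR : gcdL (R q) = d := gcdL_R hq hlen
  intro hcon
  rw [hgR] at hcon
  -- f (R q) = maxL (R q)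
  have hfRmax : f (R q) = maxL (R q) :=
    f_eq_maxL_of_headI_eq_gcd (OFS_R hq) (by rw [hcon, hgR])
  have haltm : a < m := headI_lt_maxL hq hlen
  have hm2a : 2 * a < m := by
    have := maxL_R hq hlen
    rw [hfRmax, this] at hfR
    rcases max_cases a (m - a) with ⟨he, _⟩ | ⟨he, _⟩ <;> omega
  -- d ∈ R q, so ∃ y ∈ tail q with y = a + d
  have hdmem : d ∈ R q := by rw [← hcon]; exact headI_mem (OFS_R hq).1
  rw [mem_R_iff hne] at hdmem
  rcases hdmem with he | ⟨y, hy, hyd⟩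
  · omega
  have hay : a < y := headI_lt_mem_tail hq hy
  have hyad : y = a + d := by omega
  have hym : y ≤ m := mem_le_maxL (List.mem_of_mem_tail hy)
  have hyneqm : y ≠ m := by omega
  -- q' = dropLast q
  set q' := q.dropLast with hq'def
  have hq'ofs : OFS q' := OFS_dropLast hq hlen
  have hq'ne : q' ≠ [] := hq'ofs.1
  have hheadq' : q'.headI = a := headI_dropLast hlen
  have hamem' : a ∈ q' := by
    rw [mem_dropLast_iff hq hne, ← maxL_eq_getLast hq hne]
    exact ⟨headI_mem hne, by omega⟩
  have hymem' : y ∈ q' := by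
    rw [mem_dropLast_iff hq hne, ← maxL_eq_getLast hq hne]
    exact ⟨List.mem_of_mem_tail hy, by omega⟩
  have hq'len : 1 < q'.length := one_lt_length_of_two_mem hamem' hymem' (by omega)
  -- gcd q' = d
  have hgq' : gcdL q' = d := by
    apply Nat.dvd_antisymm
    · have h1 : gcdL q' ∣ a := gcdL_dvd _ hamem'
      have h2 : gcdL q' ∣ y := gcdL_dvd _ hymem'
      have := Nat.dvd_sub h2 h1
      rw [hyad] at this
      simpa using this
    · apply dvd_gcdL
      intro x hx
      rw [mem_dropLast_iff hq hne] at hx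
      exact gcdL_dvd _ hx.1
  -- head of R q' is d
  have hRq'ofs := OFS_R hq'ofs
  have hgRq' : gcdL (R q') = d := by rw [gcdL_R hq'ofs hq'len, hgq']
  have hdmemRq' : d ∈ R q' := by
    rw [mem_R_iff hq'ne]
    right
    refine ⟨y, ?_, by omega⟩
    rw [mem_tail_iff hq'ofs hq'ne, hheadq']
    exact ⟨hymem', by omega⟩
  have hheadRq' : (R q').headI = d := by
    apply headI_eq_of_mem_le hRq'ofs hdmemRq'
    apply dvd_le_mem hRq'ofs hdpos
    intro z hz
    rw [← hgRq']
    exact gcdL_dvd _ hz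
  have hfRq' : f (R q') = maxL (R q') :=
    f_eq_maxL_of_headI_eq_gcd hRq'ofs (by rw [hheadRq', hgRq'])
  -- f q' < m
  have hmaxq' : maxL q' < m := maxL_dropLast_lt hq hlen
  have haleq' : a ≤ maxL q' := mem_le_maxL hamem'
  have hfq' : f q' < m := by
    rw [f_cons hq'ofs hq'len, hheadq', hfRq', maxL_R hq'ofs hq'len, hheadq']
    rcases max_cases a (maxL q' - a) with ⟨he, _⟩ | ⟨he, _⟩ <;> omega
  -- contradiction with Trim q
  rcases htrim with h1 | ⟨_, h2 | ⟨_, h3⟩⟩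
  · omega
  · exact h2 (by rw [← hddef, hgq'])
  · rw [← hq'def] at h3
    omega

theorem key_trim {q : List ℕ} (hq : OFS q) (hlen : 1 < q.length) (htrim : Trim q)
    (hhg : q.headI ≠ gcdL q) (hfR : q.headI < f (R q)) :
    Trim (R q) := by
  set d := gcdL q with hddef
  set a := q.headI with hadef
  set m := maxL q with hmdef
  have hne : q ≠ [] := hq.1
  have hdpos : 0 < d := gcdL_pos hq
  have hda : d ∣ a := gcdL_dvd _ (headI_mem hne)
  have hdlta : d < a := lt_of_le_of_ne (Nat.le_of_dvd (hq.2.2 _ (headI_mem hne)) hda)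
    (Ne.symm hhg)
  have hgR : gcdL (R q) = d := gcdL_R hq hlen
  have hRofs := OFS_R hq
  rcases eq_or_lt_of_le (Nat.one_le_iff_ne_zero.2 (by
    intro h0; exact hRofs.1 (List.length_eq_zero_iff.1 h0))) with hRl | hRl
  · exact Or.inl hRl.symm
  right
  refine ⟨hRl, ?_⟩
  by_contra hcon
  push_neg at hcon
  obtain ⟨hgeq, hfle'⟩ := hcon
  have hfle := hfle' hgeq
  -- Lemma F: f (R q) ≤ maxL (R q)
  have hF : f (R q) ≤ maxL (R q) :=
    f_le_maxL_of_nontrim hRofs hRl hgeq.symm hfle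
  have haltm : a < m := headI_lt_maxL hq hlen
  have hm2a : 2 * a < m := by
    have := maxL_R hq hlen
    rw [this] at hF
    rcases max_cases a (m - a) with ⟨he, _⟩ | ⟨he, _⟩ <;> omega
  have hmR : maxL (R q) = m - a := by
    rw [maxL_R hq hlen]; omega
  -- dropLast (R q) = R q'
  set q' := q.dropLast with hq'def
  have hq'ofs : OFS q' := OFS_dropLast hq hlen
  have hq'ne : q' ≠ [] := hq'ofs.1
  have hheadq' : q'.headI = a := headI_dropLast hlen
  have hdR : (R q).dropLast = R q' := dropLast_R_eq hq hlen (by omega)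
  rcases eq_or_lt_of_le (Nat.one_le_iff_ne_zero.2 (by
    intro h0; exact hq'ne (List.length_eq_zero_iff.1 h0))) with hq'l | hq'l
  · -- q' singleton [a]: gcd (R q)' = a ≠ d
    obtain ⟨b, hb⟩ := List.length_eq_one_iff.1 hq'l.symm
    have hba : b = a := by rw [← hheadq', hb]; rfl
    have : gcdL (R q).dropLast = a := by
      rw [hdR, hb, hba]
      show gcdL [a] = a
      show Nat.gcd a 0 = a
      simp
    rw [← hgeq, hgR] at this
    omega
  · -- q' length ≥ 2
    have hgq' : gcdL q' = d := by
      rw [← gcdL_R hq'ofs hq'l, ← hdR, ← hgeq, hgR]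
    have hfq' : f q' ≤ m := by
      rw [f_cons hq'ofs hq'l, hheadq', ← hdR]
      have := hfle
      rw [hmR] at this
      omega
    rcases htrim with h1 | ⟨_, h2 | ⟨_, h3⟩⟩
    · omega
    · exact h2 (by rw [← hddef, hgq'])
    · rw [← hq'def] at h3
      omega

def Per (p : List ℕ) (K : ℕ) (w : ℕ → ℕ) : Prop :=
  ∀ i e, 1 ≤ i → e ∈ p → i + e ≤ K → w i = w (i + e)

theorem constr {p : List ℕ} (hp : OFS p) (hlen : 1 < p.length) {w' : ℕ → ℕ}
    (hw' : Per (R p) (f (R p) - 1) w') :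
    ∃ w : ℕ → ℕ, Per p (f p - 1) w ∧
      (∀ x, 1 ≤ x → x + p.headI ≤ f p - 1 → w (x + p.headI) = w' x) ∧
      (∀ i j, f (R p) - 1 < i → i ≤ p.headI → 1 ≤ j → j ≤ f p - 1 → j ≠ i →
        w j ≠ w i) := by
  have hne : p ≠ [] := hp.1
  set a := p.headI with hadef
  have hapos : 0 < a := hp.2.2 _ (headI_mem hne)
  set k' := f (R p) - 1 with hk'def
  have hfRpos : 0 < f (R p) := f_pos (OFS_R hp)
  have hk : f p - 1 = a + k' := by
    rw [f_cons hp hlen]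
    omega
  set M := ((Finset.Icc 1 k').sup w') + 1 with hMdef
  have hMbound : ∀ y, 1 ≤ y → y ≤ k' → w' y < M := by
    intro y h1 h2
    have : w' y ≤ (Finset.Icc 1 k').sup w' := Finset.le_sup (Finset.mem_Icc.2 ⟨h1, h2⟩)
    omega
  refine ⟨fun i => if a < i then w' (i - a) else if i ≤ k' then w' i else M + i, ?_, ?_, ?_⟩
  · -- periodicity
    intro i e h1 he hik
    rw [hk] at hik
    have haR : a ∈ R p := headI_mem_R hne
    simp only
    rcases eq_or_ne e a with rfl | hea
    · rcases le_or_gt i a with hia | hia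
      · have hik' : i ≤ k' := by omega
        rw [if_neg (by omega), if_pos hik', if_pos (by omega)]
        congr 1
        omega
      · rw [if_pos hia, if_pos (by omega)]
        have : w' (i - a) = w' ((i - a) + a) := hw' (i - a) a (by omega) haR (by omega)
        rw [this]
        congr 1
        omega
    · have heT : e ∈ p.tail := (mem_tail_iff hp hne).2 ⟨he, hea⟩
      have hae : a < e := headI_lt_mem_tail hp heT
      have heaR : e - a ∈ R p := (mem_R_iff hne).2 (Or.inr ⟨e, heT, rfl⟩)
      rcases le_or_gt i a with hia | hia
      · have hik' : i ≤ k' := by omega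
        rw [if_neg (by omega), if_pos hik', if_pos (by omega)]
        have : w' i = w' (i + (e - a)) := hw' i (e - a) h1 heaR (by omega)
        rw [this]
        congr 1
        omega
      · rw [if_pos hia, if_pos (by omega)]
        have h2 : w' (i - a) = w' ((i - a) + (e - a)) :=
          hw' (i - a) (e - a) (by omega) heaR (by omega)
        have h3 : w' ((i - a) + (e - a)) = w' (((i - a) + (e - a)) + a) :=
          hw' ((i - a) + (e - a)) a (by omega) haR (by omega)
        rw [h2, h3]
        congr 1
        omega
  · -- embedding
    intro x h1 h2
    simp only
    rw [if_pos (by omega)]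
    congr 1
    omega
  · -- fresh uniqueness
    intro i j hi1 hi2 hj1 hj2 hji
    rw [hk] at hj2
    simp only
    have hwi : (if a < i then w' (i - a) else if i ≤ k' then w' i else M + i) = M + i := by
      rw [if_neg (by omega), if_neg (by omega)]
    rw [hwi]
    rcases le_or_gt j a with hja | hja
    · rcases le_or_gt j k' with hjk | hjk
      · rw [if_neg (by omega), if_pos hjk]
        have := hMbound j hj1 hjk
        omega
      · rw [if_neg (by omega), if_neg (by omega)]
        omega
    · rw [if_pos hja]
      have := hMbound (j - a) (by omega) (by omega)
      omega

theorem exists_periodic : ∀ (N : ℕ), ∀ {p : List ℕ}, OFS p → maxL p ≤ N →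
    ∃ w : ℕ → ℕ, Per p (f p - 1) w := by
  intro N
  induction N using Nat.strong_induction_on with
  | _ N ih =>
    intro p hp hN
    rcases eq_or_lt_of_le (Nat.one_le_iff_ne_zero.2 (by
      intro h0; exact hp.1 (List.length_eq_zero_iff.1 h0))) with h | h
    · obtain ⟨b, rfl⟩ := List.length_eq_one_iff.1 h.symm
      refine ⟨fun _ => 0, ?_⟩
      intro i e h1 he hik
      rfl
    · have hRlt := maxL_R_lt hp h
      obtain ⟨w', hw'⟩ := ih (N - 1) (by omega) (OFS_R hp) (by omega)
      obtain ⟨w, hw, _, _⟩ := constr hp h hw'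
      exact ⟨w, hw⟩

theorem mainB : ∀ (N : ℕ), ∀ {q : List ℕ}, OFS q → maxL q ≤ N → Trim q →
    q.headI ≠ gcdL q →
    ∃ w : ℕ → ℕ, Per q (f q - 1) w ∧
      ∃ i, 1 ≤ i ∧ i + gcdL q ≤ f q - 1 ∧ w i ≠ w (i + gcdL q) := by
  intro N
  induction N using Nat.strong_induction_on with
  | _ N ih =>
    intro q hq hN htrim hhg
    set d := gcdL q with hddef
    set a := q.headI with hadef
    have hne : q ≠ [] := hq.1
    have hdpos : 0 < d := gcdL_pos hq
    have hda : d ∣ a := gcdL_dvd _ (headI_mem hne)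
    have hdlta : d < a := lt_of_le_of_ne (Nat.le_of_dvd (hq.2.2 _ (headI_mem hne)) hda)
      (Ne.symm hhg)
    have hlen : 1 < q.length := by
      rcases eq_or_lt_of_le (Nat.one_le_iff_ne_zero.2 (by
        intro h0; exact hne (List.length_eq_zero_iff.1 h0))) with h | h
      · exfalso
        obtain ⟨b, rfl⟩ := List.length_eq_one_iff.1 h.symm
        apply hhg
        rw [hadef, hddef]
        show b = Nat.gcd b 0
        simp
      · exact h
    have hfRpos : 0 < f (R q) := f_pos (OFS_R hq)
    have hk : f q - 1 = a + (f (R q) - 1) := by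
      rw [f_cons hq hlen]
      omega
    rcases le_or_gt (f (R q)) a with hc | hc
    · -- fresh case
      obtain ⟨w', hw'⟩ := exists_periodic (maxL (R q)) (OFS_R hq) le_rfl
      obtain ⟨w, hper, hemb, hfresh⟩ := constr hq hlen hw'
      refine ⟨w, hper, a - d, by omega, by omega, ?_⟩
      have : (a - d) + d = a := by omega
      rw [this]
      exact hfresh a (a - d) (by omega) le_rfl (by omega) (by omega) (by omega)
    · -- lift case
      have htrimR : Trim (R q) := key_trim hq hlen htrim hhg hc
      have hheadR : (R q).headI ≠ gcdL (R q) := key_head hq hlen htrim hhg hc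
      have hRlt := maxL_R_lt hq hlen
      obtain ⟨w', hw', i', hi1, hi2, hi3⟩ :=
        ih (N - 1) (by omega) (OFS_R hq) (by omega) htrimR hheadR
      rw [gcdL_R hq hlen, ← hddef] at hi2 hi3
      obtain ⟨w, hper, hemb, _⟩ := constr hq hlen hw'
      refine ⟨w, hper, i' + a, by omega, by omega, ?_⟩
      have e1 : w (i' + a) = w' i' := hemb i' hi1 (by omega)
      have e2 : w ((i' + a) + d) = w' (i' + d) := by
        have : (i' + a) + d = (i' + d) + a := by omega
        rw [this]
        exact hemb (i' + d) (by omega) (by omega)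
      rw [e1, e2]
      exact hi3

theorem fw_trim : ∀ (n : ℕ) {p : List ℕ}, OFS p → p.length ≤ n →
    ∃ q : List ℕ, OFS q ∧ fw p = f q ∧ Trim q ∧ gcdL q = gcdL p ∧
      q.headI = p.headI ∧ (∀ e ∈ p, e ∈ q ∨ f q ≤ e) ∧ (q = p ∨ f q ≤ maxL p) := by
  intro n
  induction n using Nat.strong_induction_on with
  | _ n ih =>
    intro p hp hn
    rw [fw]
    split_ifs with hcond
    · obtain ⟨hlen, hg, hf⟩ := hcond
      have hp' : OFS p.dropLast := OFS_dropLast hp hlen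
      have hlen' : p.dropLast.length < p.length := by
        rw [List.length_dropLast]
        omega
      obtain ⟨q, hq, hfwq, htrim, hgq, hhq, hmem, hA⟩ :=
        ih (n - 1) (by omega) hp' (by omega)
      have hfqm : f q ≤ maxL p := by
        rcases hA with rfl | hA
        · exact hf
        · have := maxL_dropLast_lt hp hlen
          omega
      refine ⟨q, hq, hfwq, htrim, by rw [hgq, hg], by rw [hhq, headI_dropLast hlen],
        ?_, Or.inr hfqm⟩
      intro e he
      rcases eq_or_ne e (p.getLast hp.1) with rfl | hne
      · exact Or.inr (le_trans hfqm (le_of_eq (maxL_eq_getLast hp hp.1)))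
      · exact hmem e ((mem_dropLast_iff hp hp.1).2 ⟨he, hne⟩)
    · refine ⟨p, hp, rfl, ?_, rfl, rfl, fun e he => Or.inl he, Or.inl rfl⟩
      push_neg at hcond
      rcases eq_or_lt_of_le (Nat.one_le_iff_ne_zero.2 (by
        intro h0; exact hp.1 (List.length_eq_zero_iff.1 h0))) with h | h
      · exact Or.inl h.symm
      · right
        refine ⟨h, ?_⟩
        rcases eq_or_ne (gcdL p.dropLast) (gcdL p) with hg | hg
        · exact Or.inr ⟨hg.symm, by have := hcond h hg; omega⟩
        · exact Or.inl (Ne.symm hg)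

theorem optimality (p : List ℕ) (hp : OFS p) (h : p.headI ≠ gcdL p) :
    gcdL p < Nat.card ((G p (fw p - 1)).ConnectedComponent) := by
  classical
  obtain ⟨q, hq, hfw, htrim, hgq, hhq, hmem, _⟩ := fw_trim p.length hp le_rfl
  set d := gcdL p with hddef
  have hdpos : 0 < d := gcdL_pos hp
  have hhgq : q.headI ≠ gcdL q := by rw [hhq, hgq]; exact h
  obtain ⟨w, hper, i, hi1, hi2, hi3⟩ := mainB (maxL q) hq le_rfl htrim hhgq
  rw [hgq] at hi2 hi3
  rw [hfw]
  set k := f q - 1 with hkdef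
  have hk2 : 2 ≤ k := by omega
  -- invariant
  set c : Fin k → ℕ × ℕ := fun v => ((v.val + 1) % d, w (v.val + 1)) with hcdef
  have hadj : ∀ u v : Fin k, (G p k).Adj u v → c u = c v := by
    intro u v huv
    obtain ⟨hne, hsub⟩ := huv
    have hvne : (u : ℕ) ≠ (v : ℕ) := fun he => hne (Fin.ext he)
    -- extract the positive difference
    have hkey : ∀ x y : Fin k, (x : ℕ) < (y : ℕ) → ((y : ℕ) - (x : ℕ)) ∈ p → c x = c y := by
      intro x y hxy hmem'
      set e := (y : ℕ) - (x : ℕ) with hedef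
      have hepos : 0 < e := by omega
      have heq : (y : ℕ) + 1 = (x : ℕ) + 1 + e := by omega
      have hey : (y : ℕ) < k := y.isLt
      have hele : (x : ℕ) + 1 + e ≤ k := by omega
      have heq2 : e ∈ q := by
        rcases hmem e hmem' with h1 | h1
        · exact h1
        · exfalso; omega
      have hde : d ∣ e := hgq ▸ gcdL_dvd _ heq2
      have hw : w ((x : ℕ) + 1) = w ((y : ℕ) + 1) := by
        rw [heq]
        exact hper ((x : ℕ) + 1) e (by omega) heq2 hele
      have hmod : ((x : ℕ) + 1) % d = ((y : ℕ) + 1) % d := by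
        obtain ⟨t, ht⟩ := hde
        rw [heq, ht, Nat.add_mul_mod_self_left]
      simp only [hcdef]
      rw [hw, hmod]
    rcases lt_or_gt_of_ne hvne with hlt | hlt
    · rcases hsub with h1 | h1
      · exact hkey u v hlt h1
      · exfalso
        have : (u : ℕ) - (v : ℕ) = 0 := by omega
        rw [this] at h1
        exact absurd (hp.2.2 0 h1) (by omega)
    · rcases hsub with h1 | h1
      · exfalso
        have : (v : ℕ) - (u : ℕ) = 0 := by omega
        rw [this] at h1
        exact absurd (hp.2.2 0 h1) (by omega)
      · exact (hkey v u hlt h1).symm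
  have hreach : ∀ u v : Fin k, (G p k).Reachable u v → c u = c v := by
    intro u v huv
    obtain ⟨walk⟩ := huv
    induction walk with
    | nil => rfl
    | cons hadj' _ ih => exact (hadj _ _ hadj').trans ih
  -- the d + 1 vertices
  have hvert : ∀ j : Fin (d + 1), i + (j : ℕ) - 1 < k := by
    intro j
    have := j.isLt
    omega
  set φ : Fin (d + 1) → (G p k).ConnectedComponent :=
    fun j => (G p k).connectedComponentMk ⟨i + (j : ℕ) - 1, hvert j⟩ with hφdef
  have haux : ∀ j j' : Fin (d + 1), (j : ℕ) ≤ (j' : ℕ) → φ j = φ j' → (j : ℕ) = (j' : ℕ) := by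
    intro j j' hle hφ
    have hr : (G p k).Reachable ⟨i + (j : ℕ) - 1, hvert j⟩ ⟨i + (j' : ℕ) - 1, hvert j'⟩ :=
      SimpleGraph.ConnectedComponent.exact hφ
    have hc := hreach _ _ hr
    simp only [hcdef] at hc
    have e1 : i + (j : ℕ) - 1 + 1 = i + (j : ℕ) := by omega
    have e2 : i + (j' : ℕ) - 1 + 1 = i + (j' : ℕ) := by omega
    rw [e1, e2] at hc
    have h1 : (i + (j : ℕ)) % d = (i + (j' : ℕ)) % d := congrArg Prod.fst hc
    have h2 : w (i + (j : ℕ)) = w (i + (j' : ℕ)) := congrArg Prod.snd hc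
    have hdvd : d ∣ (i + (j' : ℕ)) - (i + (j : ℕ)) := (Nat.modEq_iff_dvd' (by omega)).mp h1
    have hsub : (i + (j' : ℕ)) - (i + (j : ℕ)) = (j' : ℕ) - (j : ℕ) := by omega
    rw [hsub] at hdvd
    rcases Nat.eq_zero_or_pos ((j' : ℕ) - (j : ℕ)) with h0 | h0
    · omega
    · exfalso
      have hdle : d ≤ (j' : ℕ) - (j : ℕ) := Nat.le_of_dvd h0 hdvd
      have hjlt := j.isLt
      have hjlt' := j'.isLt
      have hjd : (j : ℕ) = 0 ∧ (j' : ℕ) = d := by omega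
      rw [hjd.1, hjd.2] at h2
      simp only [Nat.add_zero] at h2
      exact hi3 h2
  have hφinj : Function.Injective φ := by
    intro j j' hφ
    rcases le_total (j : ℕ) (j' : ℕ) with hle | hle
    · exact Fin.ext (haux j j' hle hφ)
    · exact (Fin.ext (haux j' j hle hφ.symm)).symm
  have hcard : d + 1 ≤ Nat.card ((G p k).ConnectedComponent) := by
    have hfin : Finite ((G p k).ConnectedComponent) := Quot.finite _
    calc d + 1 = Nat.card (Fin (d + 1)) := by simp
    _ ≤ Nat.card ((G p k).ConnectedComponent) := Nat.card_le_card_of_injective φ hφinj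
  omega
end

section
/- Let p ∈ OFS be such that some entry p_j (with j > i) is a multiple of another entry p_i, and let q ∈ OFS be obtained by deleting p_j from p. Then for every positive integer k, the connected components of G(p,k) are identical to those of G(q,k), and fw(p) = fw(q). -/
/-! ### Auxiliary lemmas -/

namespace FirstRed

lemma le_maxL {p : List ℕ} {x : ℕ} (hx : x ∈ p) : x ≤ maxL p := by
  induction p with
  | nil => cases hx
  | cons a l ih =>
    rcases List.mem_cons.1 hx with rfl | h
    · exact le_max_left _ _
    · exact le_trans (ih h) (le_max_right _ _)

lemma maxL_mem {p : List ℕ} (hp : p ≠ []) : maxL p ∈ p := by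
  induction p with
  | nil => simp at hp
  | cons a l ih =>
    rcases eq_or_ne l [] with rfl | hl
    · simp [maxL]
    · show max a (maxL l) ∈ _
      rcases le_total a (maxL l) with h | h
      · rw [max_eq_right h]; exact List.mem_cons_of_mem _ (ih hl)
      · rw [max_eq_left h]; exact List.mem_cons_self

lemma maxL_concat (l : List ℕ) (m : ℕ) : maxL (l ++ [m]) = max (maxL l) m := by
  induction l with
  | nil => simp [maxL]
  | cons a l ih =>
    show max a (maxL (l ++ [m])) = _
    rw [ih]
    show _ = max (max a (maxL l)) m
    omega

lemma gcdL_dvd {p : List ℕ} {x : ℕ} (hx : x ∈ p) : gcdL p ∣ x := by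
  induction p with
  | nil => cases hx
  | cons a l ih =>
    rcases List.mem_cons.1 hx with rfl | h
    · exact Nat.gcd_dvd_left _ _
    · exact (Nat.gcd_dvd_right a (gcdL l)).trans (ih h)

lemma dvd_gcdL {p : List ℕ} {d : ℕ} (h : ∀ x ∈ p, d ∣ x) : d ∣ gcdL p := by
  induction p with
  | nil => exact Dvd.intro 0 rfl
  | cons a l ih =>
    exact Nat.dvd_gcd (h a (List.mem_cons_self)) (ih fun x hx => h x (List.mem_cons_of_mem _ hx))

lemma one_lt_length {p : List ℕ} {x y : ℕ} (hx : x ∈ p) (hy : y ∈ p) (hxy : x ≠ y) :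
    1 < p.length := by
  rcases p with _ | ⟨a, _ | ⟨b, l⟩⟩
  · cases hx
  · simp at hx hy; omega
  · simp

/-- Strict-sorted facts -/
lemma sorted_head_lt {a : ℕ} {t : List ℕ} (hs : (a :: t).Pairwise (· < ·)) :
    ∀ x ∈ t, a < x := (List.pairwise_cons.1 hs).1

lemma OFS_nodup {p : List ℕ} (hp : OFS p) : p.Nodup := hp.2.1.nodup

lemma OFS_sublist {p q : List ℕ} (hp : OFS p) (hq : q.Sublist p) (hne : q ≠ []) : OFS q :=
  ⟨hne, hp.2.1.sublist hq, fun x hx => hp.2.2 x (hq.mem hx)⟩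


/-! ### Structure of `R` -/

/-- The unsorted pre-list of `R`. -/
def pre (a : ℕ) (t : List ℕ) : List ℕ := (t.map (fun x => x - a)).insert a

lemma R_cons (a b : ℕ) (l : List ℕ) :
    R (a :: b :: l) = (pre a (b :: l)).mergeSort (· ≤ ·) := rfl

lemma R_perm (a b : ℕ) (l : List ℕ) : (R (a :: b :: l)).Perm (pre a (b :: l)) :=
  List.mergeSort_perm _ _

lemma R_sorted' (a b : ℕ) (l : List ℕ) : (R (a :: b :: l)).Pairwise (· ≤ ·) := by
  rw [R_cons]
  have h := List.pairwise_mergeSort (le := fun x y : ℕ => decide (x ≤ y))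
    (by intro x y z hxy hyz; simp at *; omega) (by intro x y; simp; omega) (pre a (b :: l))
  simpa using h

lemma mem_pre {a : ℕ} {t : List ℕ} {x : ℕ} :
    x ∈ pre a t ↔ x = a ∨ ∃ y ∈ t, x = y - a := by
  unfold pre
  rw [List.mem_insert_iff, List.mem_map]
  constructor
  · rintro (rfl | ⟨y, hy, rfl⟩)
    · exact Or.inl rfl
    · exact Or.inr ⟨y, hy, rfl⟩
  · rintro (rfl | ⟨y, hy, rfl⟩)
    · exact Or.inl rfl
    · exact Or.inr ⟨y, hy, rfl⟩

lemma mem_R {a b : ℕ} {l : List ℕ} {x : ℕ} :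
    x ∈ R (a :: b :: l) ↔ x = a ∨ ∃ y ∈ b :: l, x = y - a := by
  rw [(R_perm a b l).mem_iff, mem_pre]

lemma a_mem_R (a b : ℕ) (l : List ℕ) : a ∈ R (a :: b :: l) := mem_R.2 (Or.inl rfl)

lemma pre_nodup {a : ℕ} {t : List ℕ} (hs : t.Pairwise (· < ·)) (hat : ∀ x ∈ t, a < x) :
    (pre a t).Nodup := by
  have hmap : (t.map (fun x => x - a)).Nodup := by
    have : (t.map (fun x => x - a)).Pairwise (· < ·) := by
      rw [List.pairwise_map]
      refine hs.imp_of_mem ?_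
      intro x y hx hy hxy
      have := hat x hx
      omega
    exact this.nodup
  unfold pre List.insert
  split
  · exact hmap
  · next h => exact List.Nodup.cons (by simpa using h) hmap

lemma R_OFS {a b : ℕ} {l : List ℕ} (hp : OFS (a :: b :: l)) : OFS (R (a :: b :: l)) := by
  have hs := hp.2.1
  have hat := sorted_head_lt hs
  have hnd : (R (a :: b :: l)).Nodup :=
    ((R_perm a b l).nodup_iff).2 (pre_nodup (List.pairwise_cons.1 hs).2 hat)
  refine ⟨?_, ((R_sorted' a b l).sortedLE.sortedLT_of_nodup hnd).pairwise, ?_⟩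
  · intro h
    have := a_mem_R a b l
    rw [h] at this; cases this
  · intro x hx
    rcases mem_R.1 hx with rfl | ⟨y, hy, rfl⟩
    · exact hp.2.2 _ (List.mem_cons_self)
    · have := hat y hy; omega

lemma maxL_R_lt {a b : ℕ} {l : List ℕ} (hp : OFS (a :: b :: l)) :
    maxL (R (a :: b :: l)) < maxL (a :: b :: l) := by
  have hat := sorted_head_lt hp.2.1
  have hb : b ∈ b :: l := List.mem_cons_self
  have hbm : b ≤ maxL (a :: b :: l) := le_maxL (by simp)
  have hab : a < b := hat b hb
  have h0 : 0 < a := hp.2.2 a (List.mem_cons_self)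
  have hmem := maxL_mem (p := R (a :: b :: l)) (by
    intro h; have := a_mem_R a b l; rw [h] at this; cases this)
  rcases mem_R.1 hmem with h | ⟨y, hy, h⟩
  · omega
  · have hy' : y ≤ maxL (a :: b :: l) := le_maxL (List.mem_cons_of_mem _ hy)
    omega

lemma maxL_sub_le_R {a b : ℕ} {l : List ℕ} :
    maxL (a :: b :: l) - a ≤ maxL (R (a :: b :: l)) ∨ maxL (a :: b :: l) = a := by
  have hmem := maxL_mem (p := a :: b :: l) (by simp)
  rcases List.mem_cons.1 hmem with h | h
  · exact Or.inr h
  · exact Or.inl (le_maxL (mem_R.2 (Or.inr ⟨_, h, rfl⟩)))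

lemma gcdL_R {a b : ℕ} {l : List ℕ} (hp : OFS (a :: b :: l)) :
    gcdL (R (a :: b :: l)) = gcdL (a :: b :: l) := by
  have hat := sorted_head_lt hp.2.1
  apply Nat.dvd_antisymm
  · apply dvd_gcdL
    intro x hx
    rcases List.mem_cons.1 hx with rfl | hx
    · exact gcdL_dvd (a_mem_R _ b l)
    · have h1 : gcdL (R (a :: b :: l)) ∣ x - a := gcdL_dvd (mem_R.2 (Or.inr ⟨x, hx, rfl⟩))
      have h2 : gcdL (R (a :: b :: l)) ∣ a := gcdL_dvd (a_mem_R a b l)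
      have hax : a ≤ x := le_of_lt (hat x hx)
      have : x = (x - a) + a := by omega
      rw [this]; exact Nat.dvd_add h1 h2
  · apply dvd_gcdL
    intro x hx
    rcases mem_R.1 hx with rfl | ⟨y, hy, rfl⟩
    · exact gcdL_dvd (List.mem_cons_self)
    · exact Nat.dvd_sub (gcdL_dvd (List.mem_cons_of_mem _ hy)) (gcdL_dvd (List.mem_cons_self))

/-! ### Facts about `f` -/

lemma f_nil : f [] = 0 := rfl

lemma f_single (a : ℕ) : f [a] = a := rfl

lemma faux_eq_f : ∀ n : ℕ, ∀ p : List ℕ, OFS p → maxL p < n → faux n p = f p := by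
  intro n
  induction n using Nat.strong_induction_on with
  | _ n ih =>
    intro p hp hlt
    match p with
    | [] => cases hp.1 rfl
    | [a] =>
      cases n with
      | zero => rfl
      | succ n => rfl
    | a :: b :: l =>
      cases n with
      | zero => omega
      | succ n =>
        have hR : OFS (R (a :: b :: l)) := R_OFS hp
        have hRlt := maxL_R_lt hp
        have h1 : faux (n + 1) (a :: b :: l) = a + faux n (R (a :: b :: l)) := rfl
        have h2 : faux n (R (a :: b :: l)) = f (R (a :: b :: l)) := by
          apply ih n (by omega) _ hR; omega
        have h3 : f (a :: b :: l) = a + faux (maxL (a :: b :: l)) (R (a :: b :: l)) := rfl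
        have h4 : faux (maxL (a :: b :: l)) (R (a :: b :: l)) = f (R (a :: b :: l)) := by
          apply ih _ (by omega) _ hR; omega
        rw [h1, h2, h3, h4]

lemma f_cons {a b : ℕ} {l : List ℕ} (hp : OFS (a :: b :: l)) :
    f (a :: b :: l) = a + f (R (a :: b :: l)) := by
  have h3 : f (a :: b :: l) = a + faux (maxL (a :: b :: l)) (R (a :: b :: l)) := rfl
  rw [h3, faux_eq_f _ _ (R_OFS hp) (maxL_R_lt hp)]

lemma maxL_le_f : ∀ N : ℕ, ∀ p : List ℕ, maxL p ≤ N → OFS p → maxL p ≤ f p := by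
  intro N
  induction N using Nat.strong_induction_on with
  | _ N ih =>
    intro p hN hp
    match p with
    | [] => cases hp.1 rfl
    | [a] => simp [f_single, maxL]
    | a :: b :: l =>
      have hR : OFS (R (a :: b :: l)) := R_OFS hp
      have hRlt := maxL_R_lt hp
      have hfR : maxL (R (a :: b :: l)) ≤ f (R (a :: b :: l)) := by
        rcases Nat.eq_zero_or_pos N with rfl | hNpos
        · omega
        · exact ih (maxL (R (a :: b :: l))) (by omega) _ le_rfl hR
      rw [f_cons hp]
      rcases maxL_sub_le_R (a := a) (b := b) (l := l) with h | h
      · omega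
      · have : b ≤ maxL (a :: b :: l) := le_maxL (by simp)
        have hab : a < b := sorted_head_lt hp.2.1 b (by simp)
        omega

/-! ### Semigroup membership -/

/-- `Semi s n`: `n` is a sum of a nonempty list of elements of `s`. -/
def Semi (s : List ℕ) (n : ℕ) : Prop :=
  ∃ l : List ℕ, l ≠ [] ∧ (∀ x ∈ l, x ∈ s) ∧ l.sum = n

lemma Semi_of_dvd {s : List ℕ} {a n : ℕ} (ha : a ∈ s) (h0 : 0 < a) (hd : a ∣ n) (hn : 0 < n) :
    Semi s n := by
  obtain ⟨c, rfl⟩ := hd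
  refine ⟨List.replicate c a, ?_, ?_, ?_⟩
  · have hc : c ≠ 0 := by rintro rfl; simp at hn
    simp [hc]
  · intro x hx; rw [List.eq_of_mem_replicate hx]; exact ha
  · simp [List.sum_replicate, smul_eq_mul, Nat.mul_comm]

lemma Semi_exists_le {s : List ℕ} {n : ℕ} (h : Semi s n) : ∃ x ∈ s, x ≤ n := by
  obtain ⟨l, hne, hmem, rfl⟩ := h
  rcases l with _ | ⟨x, l⟩
  · cases hne rfl
  · exact ⟨x, hmem x (List.mem_cons_self), by simp⟩

lemma Semi_two {a : ℕ} {t : List ℕ} {n : ℕ} (hq : OFS (a :: t))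
    (h : Semi (a :: t) n) (hn : n ∉ a :: t) : 2 * a ≤ n := by
  obtain ⟨l, hne, hmem, rfl⟩ := h
  have hmin : ∀ x ∈ l, a ≤ x := by
    intro x hx
    rcases List.mem_cons.1 (hmem x hx) with hxe | hx'
    · omega
    · exact le_of_lt (sorted_head_lt hq.2.1 x hx')
  rcases l with _ | ⟨x, _ | ⟨y, l⟩⟩
  · cases hne rfl
  · exact absurd (by simpa using hmem x (by simp)) (by simpa using hn)
  · have h1 := hmin x (by simp)
    have h2 := hmin y (by simp)
    have : x + (y + (l.sum)) = (x :: y :: l).sum := by simp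
    simp only [List.sum_cons]
    omega

/-- key transport: sums over `a :: t` map to sums over `R (a :: t)` after subtracting `a`. -/
lemma Semi_R {a b0 : ℕ} {t0 : List ℕ} (hq : OFS (a :: b0 :: t0)) {n : ℕ}
    (h : Semi (a :: b0 :: t0) n) (hn : n ∉ a :: b0 :: t0) :
    Semi (R (a :: b0 :: t0)) (n - a) := by
  set q := a :: b0 :: t0 with hqdef
  have hmemtail : ∀ x, x ∈ q → x ≠ a → x - a ∈ R q := by
    intro x hx hxa
    rcases List.mem_cons.1 hx with rfl | hx'
    · exact absurd rfl hxa
    · exact mem_R.2 (Or.inr ⟨x, hx', rfl⟩)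
  have haR : a ∈ R q := a_mem_R a b0 t0
  have hmin : ∀ x ∈ q, a ≤ x := by
    intro x hx
    rcases List.mem_cons.1 hx with rfl | hx'
    · exact le_rfl
    · exact le_of_lt (sorted_head_lt hq.2.1 x hx')
  -- main induction
  have main : ∀ l : List ℕ, l ≠ [] → (∀ x ∈ l, x ∈ q) →
      (l.sum = a ∨ Semi (R q) (l.sum - a)) := by
    intro l
    induction l with
    | nil => intro h; cases h rfl
    | cons x l ihl =>
      intro _ hmem
      have hx : x ∈ q := hmem x (List.mem_cons_self)
      have hxa : a ≤ x := hmin x hx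
      rcases eq_or_ne l [] with rfl | hlne
      · -- singleton
        rcases eq_or_ne x a with hxe | hne
        · exact Or.inl (by simp only [List.sum_cons, List.sum_nil]; omega)
        · refine Or.inr ⟨[x - a], by simp, ?_, by simp⟩
          intro y hy; simp at hy; subst hy; exact hmemtail x hx hne
      · rcases ihl hlne (fun y hy => hmem y (List.mem_cons_of_mem _ hy)) with hsum | hSemi
        · -- l.sum = a
          rcases eq_or_ne x a with hxe | hne
          · refine Or.inr ⟨[a], by simp, by simpa using haR,
              by simp only [List.sum_cons, List.sum_nil]; omega⟩
          · refine Or.inr ⟨[x - a, a], by simp, ?_, ?_⟩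
            · intro y hy
              rcases List.mem_cons.1 hy with rfl | hy'
              · exact hmemtail x hx hne
              · simp at hy'; subst hy'; exact haR
            · simp only [List.sum_cons, List.sum_nil]; omega
        · -- Semi (R q) (l.sum - a)
          obtain ⟨l3, hl3ne, hl3mem, hl3sum⟩ := hSemi
          have hlsum_ge : a ≤ l.sum := by
            rcases l with _ | ⟨z, l⟩
            · cases hlne rfl
            · have := hmin z (hmem z (by simp))
              simp only [List.sum_cons]; omega
          rcases eq_or_ne x a with hxe | hne
          · refine Or.inr ⟨a :: l3, by simp, ?_, ?_⟩
            · intro y hy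
              rcases List.mem_cons.1 hy with rfl | hy'
              · exact haR
              · exact hl3mem y hy'
            · simp only [List.sum_cons, hl3sum]; omega
          · refine Or.inr ⟨(x - a) :: a :: l3, by simp, ?_, ?_⟩
            · intro y hy
              rcases List.mem_cons.1 hy with rfl | hy'
              · exact hmemtail x hx hne
              · rcases List.mem_cons.1 hy' with rfl | hy''
                · exact haR
                · exact hl3mem y hy''
            · simp only [List.sum_cons, hl3sum]; omega
  obtain ⟨l, hlne, hlmem, hlsum⟩ := h
  rcases main l hlne hlmem with hsum | hSemi
  · exact absurd (hlsum ▸ hsum ▸ List.mem_cons_self (a := a) : n ∈ q) hn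
  · rwa [hlsum] at hSemi

/-! ### `R` versus erase / append -/

lemma eq_of_perm_of_sorted {l1 l2 : List ℕ} {r : ℕ → ℕ → Prop} [Std.Antisymm r]
    (hp : l1.Perm l2) (h1 : l1.Pairwise r) (h2 : l2.Pairwise r) : l1 = l2 :=
  List.Perm.eq_of_pairwise' h1 h2 hp

lemma mSorted (l : List ℕ) : (l.mergeSort (· ≤ ·)).Pairwise (· ≤ ·) := by
  have h := List.pairwise_mergeSort (le := fun x y : ℕ => decide (x ≤ y))
    (by intro x y z hxy hyz; simp at *; omega) (by intro x y; simp; omega) l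
  simpa using h

lemma mCongr {l1 l2 : List ℕ} (h : l1.Perm l2) :
    l1.mergeSort (· ≤ ·) = l2.mergeSort (· ≤ ·) := by
  apply eq_of_perm_of_sorted _ (mSorted l1) (mSorted l2)
  exact ((List.mergeSort_perm l1 _).trans h).trans (List.mergeSort_perm l2 _).symm

lemma map_sub_not_mem {a b : ℕ} {t : List ℕ} (hgt : ∀ x ∈ t, a < x)
    (hb : ∀ x ∈ t, x ≠ b) : b - a ∉ t.map (fun x => x - a) ∨ b ≤ a := by
  rcases le_or_gt b a with h | h
  · exact Or.inr h
  · left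
    intro hmem
    obtain ⟨x, hx, hxa⟩ := List.mem_map.1 hmem
    have := hgt x hx
    have : x = b := by omega
    exact hb x hx this

lemma pre_erase_perm_2a {a b : ℕ} {t : List ℕ} (hb : b ∈ t) (hb2 : b = 2 * a)
    (hgt : ∀ x ∈ t, a < x) (hnd : t.Nodup) :
    (pre a (t.erase b)).Perm (pre a t) := by
  have hf : (fun x => x - a) b = a := by show b - a = a; have := hgt b hb; omega
  have h1 : (t.map (fun x => x - a)).Perm (a :: (t.erase b).map (fun x => x - a)) := by
    have := (List.perm_cons_erase hb).map (fun x => x - a)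
    simpa [hf] using this
  have hmem : a ∈ t.map (fun x => x - a) := List.mem_map.2 ⟨b, hb, hf⟩
  have hnotmem : a ∉ (t.erase b).map (fun x => x - a) := by
    intro hm
    obtain ⟨x, hx, hxa⟩ := List.mem_map.1 hm
    have hx' := (hnd.mem_erase_iff.1 hx)
    have := hgt x (hx'.2)
    have : x = b := by omega
    exact hx'.1 this
  unfold pre
  rw [List.insert_of_mem hmem, List.insert_of_not_mem hnotmem]
  exact h1.symm

lemma pre_erase_perm {a b : ℕ} {t : List ℕ} (hb : b ∈ t) (hb2 : b ≠ 2 * a)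
    (hgt : ∀ x ∈ t, a < x) :
    (pre a (t.erase b)).Perm ((pre a t).erase (b - a)) := by
  have hab : a < b := hgt b hb
  have hba : b - a ≠ a := by omega
  have h1 : (t.map (fun x => x - a)).Perm ((b - a) :: (t.erase b).map (fun x => x - a)) := by
    simpa using (List.perm_cons_erase hb).map (fun x => x - a)
  have h2 : ((t.map (fun x => x - a)).erase (b - a)).Perm ((t.erase b).map (fun x => x - a)) := by
    have := h1.erase (b - a)
    rwa [List.erase_cons_head] at this
  by_cases hmem : a ∈ t.map (fun x => x - a)
  · have hmem' : a ∈ (t.erase b).map (fun x => x - a) := by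
      obtain ⟨x, hx, hxa⟩ := List.mem_map.1 hmem
      have hxb : x ≠ b := by have := hgt x hx; omega
      exact List.mem_map.2 ⟨x, (List.mem_erase_of_ne hxb).2 hx, hxa⟩
    unfold pre
    rw [List.insert_of_mem hmem, List.insert_of_mem hmem']
    exact h2.symm
  · have hmem' : a ∉ (t.erase b).map (fun x => x - a) := by
      intro hm
      obtain ⟨x, hx, hxa⟩ := List.mem_map.1 hm
      exact hmem (List.mem_map.2 ⟨x, (List.erase_sublist (a := b) (l := t)).mem hx, hxa⟩)
    unfold pre
    rw [List.insert_of_not_mem hmem, List.insert_of_not_mem hmem']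
    rw [List.erase_cons_tail (by simpa using hba.symm)]
    exact h2.symm.cons a

lemma R_sorted_le {a : ℕ} {t : List ℕ} (ht : t ≠ []) : (R (a :: t)).Pairwise (· ≤ ·) := by
  rcases t with _ | ⟨b, l⟩
  · cases ht rfl
  · exact R_sorted' a b l

lemma R_perm_pre {a : ℕ} {t : List ℕ} (ht : t ≠ []) : (R (a :: t)).Perm (pre a t) := by
  rcases t with _ | ⟨b, l⟩
  · cases ht rfl
  · exact R_perm a b l

lemma R_erase_eq_2a {a b : ℕ} {t : List ℕ} (hp : OFS (a :: t)) (hb : b ∈ t)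
    (hb2 : b = 2 * a) (hne : t.erase b ≠ []) :
    R (a :: t.erase b) = R (a :: t) := by
  have ht : t ≠ [] := by rintro rfl; cases hb
  have hgt := sorted_head_lt hp.2.1
  have hnd : t.Nodup := (OFS_nodup hp).of_cons
  apply eq_of_perm_of_sorted _ (R_sorted_le hne) (R_sorted_le ht)
  exact ((R_perm_pre hne).trans (pre_erase_perm_2a hb hb2 hgt hnd)).trans (R_perm_pre ht).symm

lemma R_erase_eq {a b : ℕ} {t : List ℕ} (hp : OFS (a :: t)) (hb : b ∈ t)
    (hb2 : b ≠ 2 * a) (hne : t.erase b ≠ []) :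
    R (a :: t.erase b) = (R (a :: t)).erase (b - a) := by
  have ht : t ≠ [] := by rintro rfl; cases hb
  have hgt := sorted_head_lt hp.2.1
  refine eq_of_perm_of_sorted ?_ (R_sorted_le hne) ?_
  · exact ((R_perm_pre hne).trans (pre_erase_perm hb hb2 hgt)).trans
      ((R_perm_pre ht).symm.erase (b - a))
  · exact List.Pairwise.sublist (List.erase_sublist) (R_sorted_le ht)

lemma R_concat_eq_2a {a m : ℕ} {t' : List ℕ} (hne : t' ≠ [])
    (hlt : ∀ x ∈ t', a < x ∧ x < m) (hm : m = 2 * a) :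
    R (a :: (t' ++ [m])) = R (a :: t') := by
  have ha : (fun x => x - a) m = a := by show m - a = a; omega
  have hnotmem : a ∉ t'.map (fun x => x - a) := by
    intro hmem
    obtain ⟨x, hx, hxa⟩ := List.mem_map.1 hmem
    have := hlt x hx; omega
  apply eq_of_perm_of_sorted _ (R_sorted_le (by simp)) (R_sorted_le hne)
  refine ((R_perm_pre (by simp)).trans ?_).trans (R_perm_pre hne).symm
  unfold pre
  rw [List.map_append]
  have hmm : a ∈ t'.map (fun x => x - a) ++ [m].map (fun x => x - a) := by
    simp [ha]
  rw [List.insert_of_mem hmm, List.insert_of_not_mem hnotmem]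
  simp only [List.map_cons, List.map_nil, ha]
  exact (List.perm_append_singleton _ _).trans (List.Perm.refl _)

lemma R_concat_eq {a m : ℕ} {t' : List ℕ} (hne : t' ≠ [])
    (hlt : ∀ x ∈ t', a < x ∧ x < m) (hm : 2 * a < m)
    (hle : ∀ x ∈ R (a :: t'), x ≤ m - a) :
    R (a :: (t' ++ [m])) = R (a :: t') ++ [m - a] := by
  have hperm : (R (a :: (t' ++ [m]))).Perm (R (a :: t') ++ [m - a]) := by
    refine (R_perm_pre (by simp)).trans ?_
    have key : (pre a (t' ++ [m])).Perm (pre a t' ++ [m - a]) := by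
      unfold pre
      rw [List.map_append]
      simp only [List.map_cons, List.map_nil]
      by_cases hmem : a ∈ t'.map (fun x => x - a)
      · rw [List.insert_of_mem (by rw [List.mem_append]; exact Or.inl hmem),
          List.insert_of_mem hmem]
      · rw [List.insert_of_not_mem
          (by rw [List.mem_append]; push_neg; exact ⟨hmem, by simp; omega⟩),
          List.insert_of_not_mem hmem]
        exact List.Perm.refl _
    exact key.trans (((R_perm_pre hne).symm).append_right [m - a])
  have hsorted : (R (a :: t') ++ [m - a]).Pairwise (· ≤ ·) := by
    rw [List.pairwise_append]
    exact ⟨R_sorted_le hne, by simp,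
      fun x hx y hy => by simp at hy; subst hy; exact hle x hx⟩
  exact eq_of_perm_of_sorted hperm (R_sorted_le (by simp)) hsorted

/-! ### headI-based wrappers -/

lemma exists_cons_cons {p : List ℕ} (h : 1 < p.length) : ∃ a b l, p = a :: b :: l := by
  rcases p with _ | ⟨a, _ | ⟨b, l⟩⟩
  · simp at h
  · simp at h
  · exact ⟨a, b, l, rfl⟩

lemma f_cons' {p : List ℕ} (hp : OFS p) (h : 1 < p.length) :
    f p = p.headI + f (R p) := by
  obtain ⟨a, b, l, rfl⟩ := exists_cons_cons h
  exact f_cons hp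

lemma R_OFS' {p : List ℕ} (hp : OFS p) (h : 1 < p.length) : OFS (R p) := by
  obtain ⟨a, b, l, rfl⟩ := exists_cons_cons h
  exact R_OFS hp

lemma maxL_R_lt' {p : List ℕ} (hp : OFS p) (h : 1 < p.length) : maxL (R p) < maxL p := by
  obtain ⟨a, b, l, rfl⟩ := exists_cons_cons h
  exact maxL_R_lt hp

lemma gcdL_R' {p : List ℕ} (hp : OFS p) (h : 1 < p.length) : gcdL (R p) = gcdL p := by
  obtain ⟨a, b, l, rfl⟩ := exists_cons_cons h
  exact gcdL_R hp

lemma headI_mem_R {p : List ℕ} (h : 1 < p.length) : p.headI ∈ R p := by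
  obtain ⟨a, b, l, rfl⟩ := exists_cons_cons h
  exact a_mem_R a b l

lemma mem_R' {p : List ℕ} (h : 1 < p.length) {y : ℕ} (hy : y ∈ p) (hyh : y ≠ p.headI) :
    y - p.headI ∈ R p := by
  obtain ⟨a, b, l, rfl⟩ := exists_cons_cons h
  refine mem_R.2 (Or.inr ⟨y, ?_, rfl⟩)
  rcases List.mem_cons.1 hy with h' | h'
  · exact absurd h' hyh
  · exact h'

lemma Semi_R' {p : List ℕ} (hp : OFS p) (h : 1 < p.length) {n : ℕ}
    (hs : Semi p n) (hn : n ∉ p) : Semi (R p) (n - p.headI) := by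
  obtain ⟨a, b, l, rfl⟩ := exists_cons_cons h
  exact Semi_R hp hs hn

/-! ### The invariance lemma GL1 -/

lemma gl1 : ∀ N : ℕ, ∀ (p : List ℕ) (b : ℕ), maxL p ≤ N → OFS p → 1 < p.length →
    b ∈ p → b ≠ maxL p → Semi (p.erase b) b → f p = f (p.erase b) := by
  intro N
  induction N using Nat.strong_induction_on with
  | _ N ih =>
    intro p b hN hp hlen hbp hbmax hSemi
    obtain ⟨a, b0, t0, rfl⟩ := exists_cons_cons hlen
    set t := b0 :: t0 with htdef
    have hsorted := hp.2.1
    have hgt := sorted_head_lt hsorted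
    -- b is not the head
    have hba : b ≠ a := by
      rintro rfl
      rw [List.erase_cons_head] at hSemi
      obtain ⟨x, hx, hxle⟩ := Semi_exists_le hSemi
      have := hgt x hx; omega
    have hbt : b ∈ t := by
      rcases List.mem_cons.1 hbp with h | h
      · exact absurd h hba
      · exact h
    have hab : a < b := hgt b hbt
    have herase : (a :: t).erase b = a :: t.erase b :=
      List.erase_cons_tail (by simpa using Ne.symm hba)
    -- the max survives in t.erase b
    have hMp : maxL (a :: t) ∈ a :: t := maxL_mem (by simp)
    have hMb : b ≤ maxL (a :: t) := le_maxL hbp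
    have hMt : maxL (a :: t) ∈ t := by
      rcases List.mem_cons.1 hMp with h | h
      · omega
      · exact h
    have hMte : maxL (a :: t) ∈ t.erase b :=
      (List.mem_erase_of_ne (Ne.symm hbmax)).2 hMt
    have hne : t.erase b ≠ [] := by rintro h; rw [h] at hMte; cases hMte
    have hqOFS : OFS ((a :: t).erase b) := by
      refine OFS_sublist hp (List.erase_sublist) (by rw [herase]; simp)
    have hqlen : 1 < ((a :: t).erase b).length := by
      rw [herase]
      have : 0 < (t.erase b).length := List.length_pos_iff.2 hne
      simp only [List.length_cons]
      omega
    have hbnq : b ∉ (a :: t).erase b := by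
      intro h
      have := ((OFS_nodup hp).mem_erase_iff).1 h
      exact this.1 rfl
    have hheadq : ((a :: t).erase b).headI = a := by rw [herase]; rfl
    have hq2a : 2 * a ≤ b := by
      have := Semi_two (by rw [herase] at hqOFS; exact hqOFS) (by rwa [herase] at hSemi)
        (by rwa [herase] at hbnq)
      exact this
    rcases eq_or_ne b (2 * a) with hb2 | hb2
    · -- R q = R p
      have hRq : R (a :: t.erase b) = R (a :: t) := R_erase_eq_2a hp hbt hb2 hne
      rw [f_cons' hp hlen, f_cons' hqOFS hqlen, hheadq, herase, hRq]
      rfl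
    · -- R q = (R p).erase (b - a)
      have hRq : R (a :: t.erase b) = (R (a :: t)).erase (b - a) :=
        R_erase_eq hp hbt hb2 hne
      have hRp : OFS (R (a :: t)) := R_OFS' hp hlen
      have hbaR : b - a ∈ R (a :: t) := mem_R' hlen hbp hba
      have hMaR : maxL (a :: t) - a ∈ R (a :: t) := by
        refine mem_R' hlen hMp ?_
        show maxL (a :: t) ≠ a
        omega
      have hRlen : 1 < (R (a :: t)).length := by
        refine one_lt_length hbaR hMaR ?_
        omega
      have hbaRmax : b - a ≠ maxL (R (a :: t)) := by
        have := le_maxL hMaR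
        omega
      have hSemiR : Semi ((R (a :: t)).erase (b - a)) (b - a) := by
        rw [← hRq]
        have := Semi_R' hqOFS hqlen (n := b) hSemi (by assumption)
        rw [hheadq] at this
        rw [herase] at this
        exact this
      have hIH := ih (maxL (R (a :: t)))
        (by have := maxL_R_lt' hp hlen; omega)
        (R (a :: t)) (b - a) le_rfl hRp hRlen hbaR hbaRmax hSemiR
      rw [f_cons' hp hlen, f_cons' hqOFS hqlen, hheadq, herase, hRq, ← hIH]
      rfl

/-! ### concat helpers -/

lemma concat_lt {a m : ℕ} {t' : List ℕ} (hp : OFS (a :: (t' ++ [m]))) :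
    ∀ x ∈ t', a < x ∧ x < m := by
  intro x hx
  have h1 := sorted_head_lt hp.2.1 x (by simp [hx])
  have h2 : (t' ++ [m]).Pairwise (· < ·) := (List.pairwise_cons.1 hp.2.1).2
  rw [List.pairwise_append] at h2
  exact ⟨h1, h2.2.2 x hx m (by simp)⟩

lemma head_lt_last {a m : ℕ} {t' : List ℕ} (hp : OFS (a :: (t' ++ [m]))) : a < m :=
  sorted_head_lt hp.2.1 m (by simp)

lemma maxL_concat_eq {a m : ℕ} {t' : List ℕ} (hp : OFS (a :: (t' ++ [m]))) :
    maxL (a :: (t' ++ [m])) = m := by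
  have h1 : maxL (a :: (t' ++ [m])) = max a (max (maxL t') m) := by
    show max a (maxL (t' ++ [m])) = _
    rw [maxL_concat]
  have ham := head_lt_last hp
  have h2 : maxL t' ≤ m := by
    rcases eq_or_ne t' [] with rfl | hne
    · show (0 : ℕ) ≤ m; omega
    · have := (concat_lt hp) (maxL t') (maxL_mem hne); omega
  omega

lemma OFS_dropLast_concat {a m : ℕ} {t' : List ℕ} (hp : OFS (a :: (t' ++ [m]))) :
    OFS (a :: t') :=
  OFS_sublist hp (List.Sublist.cons₂ a (List.sublist_append_left t' [m])) (by simp)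

lemma mergeSort_self' {l : List ℕ} (h : l.Pairwise (· ≤ ·)) : l.mergeSort (· ≤ ·) = l :=
  eq_of_perm_of_sorted (List.mergeSort_perm l _) (mSorted l) h

lemma R_pair_2a {a m : ℕ} (ham : a < m) (h2 : m = 2 * a) : R [a, m] = [a] := by
  show (List.insert a ([m - a])).mergeSort (· ≤ ·) = [a]
  rw [show m - a = a by omega, List.insert_of_mem (by simp)]
  exact mergeSort_self' (by simp)

lemma R_pair {a m : ℕ} (h2 : 2 * a < m) : R [a, m] = [a, m - a] := by
  show (List.insert a ([m - a])).mergeSort (· ≤ ·) = [a, m - a]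
  rw [List.insert_of_not_mem (by simp; omega)]
  refine mergeSort_self' ?_
  simp
  omega

lemma mem_R_cons_iff {a : ℕ} {t : List ℕ} (ht : t ≠ []) {x : ℕ} :
    x ∈ R (a :: t) ↔ x = a ∨ ∃ y ∈ t, x = y - a := by
  rcases t with _ | ⟨b, l⟩
  · cases ht rfl
  · exact mem_R

lemma a_mem_R' {a : ℕ} {t : List ℕ} (ht : t ≠ []) : a ∈ R (a :: t) :=
  (mem_R_cons_iff ht).2 (Or.inl rfl)

/-! ### GL2 : removing a top semigroup element -/

lemma gl2 : ∀ N : ℕ, ∀ (t' : List ℕ) (a b : ℕ), maxL (a :: (t' ++ [b])) ≤ N →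
    OFS (a :: (t' ++ [b])) → Semi (a :: t') b → b < f (a :: t') →
    f (a :: (t' ++ [b])) = f (a :: t') := by
  intro N
  induction N using Nat.strong_induction_on with
  | _ N ih =>
    intro t' a b hN hp hSemi hfb
    have hab := head_lt_last hp
    have hlt := concat_lt hp
    rcases eq_or_ne t' [] with rfl | hne
    · rw [f_single] at hfb; omega
    · have hq : OFS (a :: t') := OFS_dropLast_concat hp
      have hqlen : 1 < (a :: t').length := by
        have : 0 < t'.length := List.length_pos_iff.2 hne
        simp only [List.length_cons]; omega
      have hbq : b ∉ a :: t' := by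
        intro h
        rcases List.mem_cons.1 h with h' | h'
        · omega
        · exact absurd (hlt b h').2 (lt_irrefl b)
      have h2a : 2 * a ≤ b := Semi_two hq hSemi hbq
      have hplen : 1 < (a :: (t' ++ [b])).length := by simp
      have hfq : f (a :: t') = a + f (R (a :: t')) := f_cons' hq hqlen
      rcases eq_or_ne b (2 * a) with hb2 | hb2
      · have hR : R (a :: (t' ++ [b])) = R (a :: t') := R_concat_eq_2a hne hlt hb2
        rw [f_cons' hp hplen, hR, hfq]
        rfl
      · have hb2' : 2 * a < b := by omega
        have hle : ∀ x ∈ R (a :: t'), x ≤ b - a := by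
          intro x hx
          rcases (mem_R_cons_iff hne).1 hx with rfl | ⟨y, hy, rfl⟩
          · omega
          · have := hlt y hy; omega
        have hR : R (a :: (t' ++ [b])) = R (a :: t') ++ [b - a] :=
          R_concat_eq hne hlt hb2' hle
        obtain ⟨c', rest, hshape⟩ : ∃ c' rest, R (a :: t') = c' :: rest := by
          rcases hh : R (a :: t') with _ | ⟨c', rest⟩
          · exfalso; have := a_mem_R' (a := a) hne; rw [hh] at this; cases this
          · exact ⟨c', rest, rfl⟩
        have hfRq : b - a < f (R (a :: t')) := by omega
        rcases eq_or_ne rest [] with rfl | hrest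
        · exfalso
          have h1 : c' ≤ b - a := hle c' (by rw [hshape]; simp)
          rw [hshape, f_single] at hfRq; omega
        · have hOFSRp : OFS (c' :: (rest ++ [b - a])) := by
            have := R_OFS' hp hplen
            rw [hR, hshape] at this
            simpa only [List.cons_append] using this
          have hmaxlt : maxL (c' :: (rest ++ [b - a])) < N := by
            have h1 := maxL_R_lt' hp hplen
            rw [hR, hshape] at h1
            simp only [List.cons_append] at h1
            exact lt_of_lt_of_le h1 hN
          have hSemiR : Semi (c' :: rest) (b - a) := by
            have := Semi_R' hq hqlen hSemi hbq
            rwa [hshape] at this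
          have hfR : b - a < f (c' :: rest) := by rwa [hshape] at hfRq
          have hIH := ih (maxL (c' :: (rest ++ [b - a]))) hmaxlt rest c' (b - a)
            le_rfl hOFSRp hSemiR hfR
          rw [f_cons' hp hplen, hfq, hR, hshape]
          simp only [List.cons_append]
          rw [hIH]
          rfl

/-! ### C2 : appending a large element keeps `f` bounded -/

lemma c2 : ∀ N : ℕ, ∀ (t' : List ℕ) (a m : ℕ), maxL (a :: (t' ++ [m])) ≤ N →
    OFS (a :: (t' ++ [m])) → gcdL (a :: t') = gcdL (a :: (t' ++ [m])) →
    f (a :: t') ≤ m → f (a :: (t' ++ [m])) ≤ m := by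
  intro N
  induction N using Nat.strong_induction_on with
  | _ N ih =>
    intro t' a m hN hp hg hfq
    have ham := head_lt_last hp
    have hlt := concat_lt hp
    have ha0 : 0 < a := hp.2.2 a (by simp)
    have hmaxp : maxL (a :: (t' ++ [m])) = m := maxL_concat_eq hp
    rcases eq_or_ne t' [] with rfl | hne
    · -- pair case
      simp only [List.nil_append] at *
      have h1 : gcdL [a] = a := by
        show Nat.gcd a (Nat.gcd 0 0) = a
        simp
      have h2 : gcdL [a, m] = Nat.gcd a m := by
        show Nat.gcd a (Nat.gcd m (Nat.gcd 0 0)) = _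
        simp
      have hdvd : a ∣ m := by
        have : a = Nat.gcd a m := by rw [← h2, ← hg, h1]
        rw [this]; exact Nat.gcd_dvd_right a m
      have h2a : 2 * a ≤ m := by
        obtain ⟨k, rfl⟩ := hdvd
        rcases Nat.lt_or_ge k 2 with hk | hk
        · interval_cases k <;> simp at ham
        · calc 2 * a = a * 2 := by ring
            _ ≤ a * k := Nat.mul_le_mul_left a hk
      have hOFSpair : OFS [a, m] := hp
      rcases eq_or_ne m (2 * a) with hm2 | hm2
      · rw [f_cons hOFSpair, R_pair_2a ham hm2, f_single]; omega
      · have hm2' : 2 * a < m := by omega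
        have hRp : R [a, m] = [a, m - a] := R_pair hm2'
        have hIH := ih (maxL (a :: ([] ++ [m - a])))
          (by
            have : maxL [a, m - a] = max a (max (m - a) 0) := rfl
            show maxL [a, m - a] < N
            omega)
          [] a (m - a)
          le_rfl
          (by
            show OFS [a, m - a]
            refine ⟨by simp, ?_, ?_⟩
            · simp; omega
            · intro x hx; rcases List.mem_cons.1 hx with rfl | hx'
              · omega
              · simp at hx'; omega)
          (by
            show gcdL [a] = gcdL [a, m - a]
            have h3 : gcdL [a, m - a] = Nat.gcd a (m - a) := by
              show Nat.gcd a (Nat.gcd (m - a) (Nat.gcd 0 0)) = _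
              simp
            rw [h1, h3]
            exact (Nat.gcd_eq_left (Nat.dvd_sub hdvd (dvd_refl a))).symm)
          (by show f [a] ≤ m - a; rw [f_single]; omega)
        simp only [List.nil_append] at hIH
        rw [f_cons hOFSpair, hRp]
        omega
    · -- general case
      have hq : OFS (a :: t') := OFS_dropLast_concat hp
      have hqlen : 1 < (a :: t').length := by
        have : 0 < t'.length := List.length_pos_iff.2 hne
        simp only [List.length_cons]; omega
      have hplen : 1 < (a :: (t' ++ [m])).length := by simp
      have hfq' : f (a :: t') = a + f (R (a :: t')) := f_cons' hq hqlen
      have hRqOFS : OFS (R (a :: t')) := R_OFS' hq hqlen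
      have hmaxfR : maxL (R (a :: t')) ≤ f (R (a :: t')) :=
        maxL_le_f (maxL (R (a :: t'))) _ le_rfl hRqOFS
      have haR : a ∈ R (a :: t') := a_mem_R' hne
      have haRle : a ≤ maxL (R (a :: t')) := le_maxL haR
      have h2a : 2 * a ≤ m := by omega
      rcases eq_or_ne m (2 * a) with hm2 | hm2
      · have hR : R (a :: (t' ++ [m])) = R (a :: t') := R_concat_eq_2a hne hlt hm2
        rw [f_cons' hp hplen, hR, show (a :: (t' ++ [m])).headI = a from rfl]
        omega
      · have hm2' : 2 * a < m := by omega
        have hle : ∀ x ∈ R (a :: t'), x ≤ m - a := by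
          intro x hx
          have := le_maxL hx
          omega
        have hR : R (a :: (t' ++ [m])) = R (a :: t') ++ [m - a] :=
          R_concat_eq hne hlt hm2' hle
        obtain ⟨c', rest, hshape⟩ : ∃ c' rest, R (a :: t') = c' :: rest := by
          rcases hh : R (a :: t') with _ | ⟨c', rest⟩
          · exfalso; rw [hh] at haR; cases haR
          · exact ⟨c', rest, rfl⟩
        have hOFSRp : OFS (c' :: (rest ++ [m - a])) := by
          have := R_OFS' hp hplen
          rw [hR, hshape] at this
          simpa only [List.cons_append] using this
        have hmaxlt : maxL (c' :: (rest ++ [m - a])) < N := by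
          have h1 := maxL_R_lt' hp hplen
          rw [hR, hshape] at h1
          simp only [List.cons_append] at h1
          exact lt_of_lt_of_le h1 hN
        have hgR : gcdL (c' :: rest) = gcdL (c' :: (rest ++ [m - a])) := by
          have e1 : gcdL (R (a :: t')) = gcdL (a :: t') := gcdL_R' hq hqlen
          have e2 : gcdL (R (a :: (t' ++ [m]))) = gcdL (a :: (t' ++ [m])) :=
            gcdL_R' hp hplen
          rw [hR] at e2
          rw [hshape] at e1 e2
          simp only [List.cons_append] at e2
          rw [e1, e2]
          exact hg
        have hfRle : f (c' :: rest) ≤ m - a := by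
          rw [← hshape]
          omega
        have hIH := ih (maxL (c' :: (rest ++ [m - a]))) hmaxlt rest c' (m - a)
          le_rfl hOFSRp hgR hfRle
        rw [f_cons' hp hplen, hR, hshape,
          show (a :: (t' ++ [m])).headI = a from rfl]
        simp only [List.cons_append]
        omega

/-! ### fw unfolding and shape helpers -/

lemma fw_pos {p : List ℕ}
    (h : 1 < p.length ∧ gcdL p.dropLast = gcdL p ∧ f p.dropLast ≤ maxL p) :
    fw p = fw p.dropLast := by
  rw [fw, dif_pos h]

lemma fw_neg {p : List ℕ}
    (h : ¬(1 < p.length ∧ gcdL p.dropLast = gcdL p ∧ f p.dropLast ≤ maxL p)) :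
    fw p = f p := by
  rw [fw, dif_neg h]

lemma maxL_concat_eq' {q1 : List ℕ} {m : ℕ} (hs : (q1 ++ [m]).Pairwise (· < ·)) :
    maxL (q1 ++ [m]) = m := by
  rw [maxL_concat]
  have hlt : ∀ x ∈ q1, x < m := by
    rw [List.pairwise_append] at hs
    exact fun x hx => hs.2.2 x hx m (by simp)
  rcases eq_or_ne q1 [] with rfl | hne
  · show max (0:ℕ) m = m; omega
  · have := hlt (maxL q1) (maxL_mem hne); omega

lemma shape2 {p : List ℕ} (hp : OFS p) (hlen : 1 < p.length) :
    ∃ c t m, p = c :: (t ++ [m]) ∧ p.dropLast = c :: t ∧ maxL p = m := by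
  rcases List.eq_nil_or_concat p with rfl | ⟨L, m, rfl⟩
  · simp at hlen
  · rw [List.concat_eq_append] at *
    rcases L with _ | ⟨c, t⟩
    · simp at hlen
    · refine ⟨c, t, m, by simp, by rw [List.dropLast_concat], ?_⟩
      exact maxL_concat_eq' hp.2.1

lemma erase_eq_dropLast_erase {p : List ℕ} (hp : OFS p) (hlen : 1 < p.length)
    {b : ℕ} (hb : b ∈ p) (hbm : b ≠ maxL p) :
    p.erase b = (p.dropLast.erase b) ++ [maxL p] := by
  obtain ⟨c, t, m, rfl, hdl, hm⟩ := shape2 hp hlen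
  rw [hdl, hm]
  rw [hm] at hbm
  have hbmem : b ∈ c :: t := by
    rcases List.mem_cons.1 hb with h | h
    · exact h ▸ List.mem_cons_self
    · rcases List.mem_append.1 h with h' | h'
      · exact List.mem_cons_of_mem _ h'
      · simp at h'; exact absurd h' hbm
  rcases List.mem_cons.1 hbmem with rfl | hbt
  · rw [List.erase_cons_head]
    rw [List.erase_cons_head]
  · have hbc : b ≠ c := by
      rintro rfl
      exact (List.pairwise_cons.1 hp.2.1).1 b (by simp [hbt]) |>.false
    rw [List.erase_cons_tail (by simpa using hbc.symm), List.erase_cons_tail (by simpa using hbc.symm)]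
    rw [List.erase_append_left _ hbt]
    rfl

lemma erase_max_eq_dropLast {p : List ℕ} (hp : OFS p) (hlen : 1 < p.length)
    (hb : maxL p ∈ p) : p.erase (maxL p) = p.dropLast := by
  obtain ⟨c, t, m, rfl, hdl, hm⟩ := shape2 hp hlen
  rw [hdl, hm]
  have hmc : m ≠ c := by
    have := sorted_head_lt hp.2.1 m (by simp)
    omega
  have hmt : m ∉ t := by
    intro h
    have := concat_lt hp m h
    omega
  rw [List.erase_cons_tail (by simpa using hmc.symm), List.erase_append_right _ hmt]
  simp

lemma gcd_erase {p : List ℕ} (hp : OFS p) {a b : ℕ} (ha : a ∈ p) (hb : b ∈ p)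
    (hab : a ≠ b) (hd : a ∣ b) : gcdL (p.erase b) = gcdL p := by
  have haq : a ∈ p.erase b := (List.mem_erase_of_ne hab).2 ha
  apply Nat.dvd_antisymm
  · apply dvd_gcdL
    intro x hx
    rcases eq_or_ne x b with rfl | hxb
    · exact (gcdL_dvd haq).trans hd
    · exact gcdL_dvd ((List.mem_erase_of_ne hxb).2 hx)
  · exact dvd_gcdL fun x hx => gcdL_dvd ((List.erase_sublist).mem hx)

lemma c2' {q : List ℕ} (hq : OFS q) (hlen : 1 < q.length)
    (hg : gcdL q.dropLast = gcdL q) (hf : f q.dropLast ≤ maxL q) : f q ≤ maxL q := by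
  obtain ⟨c, t, m, rfl, hdl, hm⟩ := shape2 hq hlen
  rw [hdl] at hg hf
  rw [hm] at hf ⊢
  exact c2 (maxL (c :: (t ++ [m]))) t c m (le_of_eq rfl) hq hg hf

lemma gl2' {p : List ℕ} (hp : OFS p) (hlen : 1 < p.length)
    (hS : Semi p.dropLast (maxL p)) (hf : maxL p < f p.dropLast) :
    f p = f p.dropLast := by
  obtain ⟨c, t, m, rfl, hdl, hm⟩ := shape2 hp hlen
  rw [hdl] at hS hf ⊢
  rw [hm] at hS hf
  exact gl2 (maxL (c :: (t ++ [m]))) t c m (le_of_eq rfl) hp hS hf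

lemma gl1' {p : List ℕ} {b : ℕ} (hp : OFS p) (hlen : 1 < p.length) (hb : b ∈ p)
    (hbm : b ≠ maxL p) (hS : Semi (p.erase b) b) : f p = f (p.erase b) :=
  gl1 (maxL p) p b le_rfl hp hlen hb hbm hS

lemma dropLast_lt {p : List ℕ} (hp : OFS p) (hlen : 1 < p.length) :
    ∀ x ∈ p.dropLast, x < maxL p := by
  obtain ⟨c, t, m, rfl, hdl, hm⟩ := shape2 hp hlen
  rw [hdl, hm]
  intro x hx
  rcases List.mem_cons.1 hx with rfl | hx'
  · exact head_lt_last hp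
  · exact (concat_lt hp x hx').2

lemma mem_dropLast {p : List ℕ} (hp : OFS p) (hlen : 1 < p.length)
    {x : ℕ} (hx : x ∈ p) (hxm : x ≠ maxL p) : x ∈ p.dropLast := by
  obtain ⟨c, t, m, rfl, hdl, hm⟩ := shape2 hp hlen
  rw [hdl]
  rw [hm] at hxm
  rcases List.mem_cons.1 hx with rfl | hx'
  · exact List.mem_cons_self
  · rcases List.mem_append.1 hx' with h' | h'
    · exact List.mem_cons_of_mem _ h'
    · simp at h'; exact absurd h' hxm

/-! ### Main fw lemma -/

lemma fw_main : ∀ n : ℕ, ∀ (p : List ℕ) (a b : ℕ), p.length ≤ n → OFS p →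
    a ∈ p → b ∈ p → a ≠ b → a ∣ b → fw p = fw (p.erase b) := by
  intro n
  induction n using Nat.strong_induction_on with
  | _ n ih =>
    intro p a b hn hp ha hb hab hdvd
    have hb0 : 0 < b := hp.2.2 b hb
    have ha0 : 0 < a := hp.2.2 a ha
    have haltb : a < b := lt_of_le_of_ne (Nat.le_of_dvd hb0 hdvd) hab
    have hlen : 1 < p.length := one_lt_length ha hb hab
    have hbmaxle : b ≤ maxL p := le_maxL hb
    have hamax : a ≠ maxL p := by omega
    have hgcdq : gcdL (p.erase b) = gcdL p := gcd_erase hp ha hb hab hdvd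
    have haq : a ∈ p.erase b := (List.mem_erase_of_ne hab).2 ha
    have hqOFS : OFS (p.erase b) := OFS_sublist hp (List.erase_sublist)
      (by intro h; rw [h] at haq; cases haq)
    have hSemib : Semi (p.erase b) b := Semi_of_dvd haq ha0 hdvd hb0
    rcases eq_or_ne b (maxL p) with hbm | hbm
    · -- b is the maximum
      have hqe : p.erase b = p.dropLast := by
        rw [hbm]; exact erase_max_eq_dropLast hp hlen (by rw [← hbm]; exact hb)
      have hdlOFS0 : OFS p.dropLast := by rw [← hqe]; exact hqOFS
      by_cases hf : f p.dropLast ≤ maxL p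
      · rw [fw_pos ⟨hlen, by rw [← hqe]; exact hgcdq, hf⟩, hqe]
      · push_neg at hf
        have hfp : f p = f p.dropLast :=
          gl2' hp hlen (by rw [← hqe, ← hbm]; exact hSemib) hf
        have hfwp : fw p = f p := fw_neg (by push_neg; intro _ _; omega)
        have hfwq : fw p.dropLast = f p.dropLast := by
          apply fw_neg
          rintro ⟨hl2, hg2, hf2⟩
          have hc := c2' hdlOFS0 hl2 hg2 hf2
          have hmaxlt : maxL p.dropLast < maxL p := by
            have hmm : maxL p.dropLast ∈ p.dropLast := maxL_mem (by
              intro hnil; rw [hnil] at hl2; simp at hl2)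
            exact dropLast_lt hp hlen _ hmm
          omega
        rw [hfwp, hfp, hqe, hfwq]
    · -- b < maxL p
      have hblt : b < maxL p := lt_of_le_of_ne hbmaxle hbm
      have hfpq : f p = f (p.erase b) := gl1' hp hlen hb hbm hSemib
      have hqe : p.erase b = (p.dropLast.erase b) ++ [maxL p] :=
        erase_eq_dropLast_erase hp hlen hb hbm
      have hadl : a ∈ p.dropLast := mem_dropLast hp hlen ha hamax
      have hbdl : b ∈ p.dropLast := mem_dropLast hp hlen hb hbm
      have hdlOFS : OFS p.dropLast := OFS_sublist hp (List.dropLast_sublist p)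
        (by intro h; rw [h] at hadl; cases hadl)
      have hdllen : 1 < p.dropLast.length := one_lt_length hadl hbdl hab
      have hadle : a ∈ p.dropLast.erase b := (List.mem_erase_of_ne hab).2 hadl
      have hgcddl : gcdL (p.dropLast.erase b) = gcdL p.dropLast :=
        gcd_erase hdlOFS hadl hbdl hab hdvd
      have hmaxq : maxL p ∈ p.erase b :=
        (List.mem_erase_of_ne (Ne.symm hbm)).2 (maxL_mem hp.1)
      have hqlen : 1 < (p.erase b).length := one_lt_length haq hmaxq (by omega)
      have hqdl : (p.erase b).dropLast = p.dropLast.erase b := by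
        rw [hqe, List.dropLast_concat]
      have hqmax : maxL (p.erase b) = maxL p := by
        rw [hqe]
        exact maxL_concat_eq' (by rw [← hqe]; exact hqOFS.2.1)
      have hSemidl : Semi (p.dropLast.erase b) b := Semi_of_dvd hadle ha0 hdvd hb0
      have hIH : fw p.dropLast = fw (p.dropLast.erase b) := by
        refine ih (p.length - 1) (by omega) p.dropLast a b ?_ hdlOFS hadl hbdl hab hdvd
        rw [List.length_dropLast]
      have hmaxdllt : maxL p.dropLast < maxL p := by
        have hmm : maxL p.dropLast ∈ p.dropLast := maxL_mem (by
          intro hnil; rw [hnil] at hadl; cases hadl)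
        exact dropLast_lt hp hlen _ hmm
      rcases eq_or_ne b (maxL p.dropLast) with hbm2 | hbm2
      · -- b is the max of dropLast
        have he2 : p.dropLast.erase b = p.dropLast.dropLast := by
          rw [hbm2]
          exact erase_max_eq_dropLast hdlOFS hdllen (by rw [← hbm2]; exact hbdl)
        by_cases hgOK : gcdL p.dropLast = gcdL p
        · by_cases hf2 : f (p.dropLast.erase b) ≤ b
          · -- conditions hold on both sides
            have hfdl : f p.dropLast ≤ maxL p.dropLast := by
              apply c2' hdlOFS hdllen
              · rw [← he2]
                exact hgcddl
              · rw [← he2, ← hbm2]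
                exact hf2
            have hcondp : fw p = fw p.dropLast :=
              fw_pos ⟨hlen, hgOK, by omega⟩
            have hcondq : fw (p.erase b) = fw ((p.erase b).dropLast) := by
              refine fw_pos ⟨hqlen, ?_, ?_⟩
              · rw [hqdl, hgcddl, hgcdq]; exact hgOK
              · rw [hqdl, hqmax]; omega
            rw [hcondp, hIH, hcondq, hqdl]
          · push_neg at hf2
            have hfdl2 : f p.dropLast = f (p.dropLast.erase b) := by
              have := gl2' hdlOFS hdllen
                (by rw [← he2] at *; rw [← hbm2]; exact hSemidl)
                (by rw [← he2] at *; rw [← hbm2]; exact hf2)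
              rw [← he2] at *
              exact this
            by_cases hf3 : f p.dropLast ≤ maxL p
            · have hcondp : fw p = fw p.dropLast := fw_pos ⟨hlen, hgOK, hf3⟩
              have hcondq : fw (p.erase b) = fw ((p.erase b).dropLast) := by
                refine fw_pos ⟨hqlen, ?_, ?_⟩
                · rw [hqdl, hgcddl, hgcdq]; exact hgOK
                · rw [hqdl, hqmax, ← hfdl2]; exact hf3
              rw [hcondp, hIH, hcondq, hqdl]
            · have h1 : fw p = f p := fw_neg (by rintro ⟨_, _, h3⟩; exact hf3 h3)
              have h2 : fw (p.erase b) = f (p.erase b) := fw_neg (by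
                rintro ⟨_, _, h3⟩
                rw [hqdl, hqmax, ← hfdl2] at h3
                exact hf3 h3)
              rw [h1, h2, hfpq]
        · have h1 : fw p = f p := fw_neg (by rintro ⟨_, hg, _⟩; exact hgOK hg)
          have h2 : fw (p.erase b) = f (p.erase b) := fw_neg (by
            rintro ⟨_, hg, _⟩
            rw [hqdl, hgcddl, hgcdq] at hg
            exact hgOK hg)
          rw [h1, h2, hfpq]
      · -- b is not the max of dropLast
        have hfdl3 : f p.dropLast = f (p.dropLast.erase b) :=
          gl1' hdlOFS hdllen hbdl hbm2 hSemidl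
        by_cases hcond : gcdL p.dropLast = gcdL p ∧ f p.dropLast ≤ maxL p
        · have hcondp : fw p = fw p.dropLast := fw_pos ⟨hlen, hcond.1, hcond.2⟩
          have hcondq : fw (p.erase b) = fw ((p.erase b).dropLast) := by
            refine fw_pos ⟨hqlen, ?_, ?_⟩
            · rw [hqdl, hgcddl, hgcdq]; exact hcond.1
            · rw [hqdl, hqmax, ← hfdl3]; exact hcond.2
          rw [hcondp, hIH, hcondq, hqdl]
        · have h1 : fw p = f p := fw_neg (by
            rintro ⟨_, h2, h3⟩; exact hcond ⟨h2, h3⟩)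
          have h2 : fw (p.erase b) = f (p.erase b) := fw_neg (by
            rintro ⟨_, h2, h3⟩
            rw [hqdl, hgcddl, hgcdq] at h2
            rw [hqdl, hqmax, ← hfdl3] at h3
            exact hcond ⟨h2, h3⟩)
          rw [h1, h2, hfpq]

/-! ### Graph part -/

lemma graph_part (p : List ℕ) (hp : OFS p) (a b : ℕ) (ha : a ∈ p) (hb : b ∈ p)
    (hab : a ≠ b) (hdvd : a ∣ b) (k : ℕ) (i j : Fin k) :
    (G p k).Reachable i j ↔ (G (p.erase b) k).Reachable i j := by
  have ha0 : 0 < a := hp.2.2 a ha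
  have hb0 : 0 < b := hp.2.2 b hb
  have haq : a ∈ p.erase b := (List.mem_erase_of_ne hab).2 ha
  have key : ∀ i j : Fin k, (i : ℕ) < (j : ℕ) → ((j : ℕ) - (i : ℕ) ∈ p) →
      (G (p.erase b) k).Reachable i j := by
    intro i j hij hd
    by_cases hdq : (j : ℕ) - (i : ℕ) ∈ p.erase b
    · exact SimpleGraph.Adj.reachable ⟨fun h => by rw [h] at hij; omega, Or.inl hdq⟩
    · have hdb : (j : ℕ) - (i : ℕ) = b := by
        by_contra hne
        exact hdq ((List.mem_erase_of_ne hne).2 hd)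
      obtain ⟨c, hc⟩ := hdvd
      have hjb : (j : ℕ) = (i : ℕ) + b := by omega
      have hstep : ∀ t : ℕ, (ht : a * t ≤ b) →
          (G (p.erase b) k).Reachable i ⟨(i : ℕ) + a * t, by omega⟩ := by
        intro t
        induction t with
        | zero =>
          intro _
          have : (⟨(i : ℕ) + a * 0, by omega⟩ : Fin k) = i := by
            apply Fin.ext; simp
          rw [this]
        | succ t iht =>
          intro hle
          have hmul : a * (t + 1) = a * t + a := by ring
          have h1 : a * t ≤ b := by omega
          refine (iht h1).trans (SimpleGraph.Adj.reachable ?_)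
          refine ⟨?_, Or.inl ?_⟩
          · intro hEq
            have := congrArg Fin.val hEq
            simp only [Fin.val_mk] at this
            omega
          · show ((i : ℕ) + a * (t + 1)) - ((i : ℕ) + a * t) ∈ p.erase b
            have : ((i : ℕ) + a * (t + 1)) - ((i : ℕ) + a * t) = a := by omega
            rw [this]
            exact haq
      have hfin := hstep c (le_of_eq hc.symm)
      have : (⟨(i : ℕ) + a * c, by omega⟩ : Fin k) = j := by
        apply Fin.ext
        simp only [Fin.val_mk]
        omega
      rwa [this] at hfin
  constructor
  · intro h
    have step : ∀ u v : Fin k, (G p k).Adj u v → (G (p.erase b) k).Reachable u v := by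
      intro u v hadj
      obtain ⟨hne, hd | hd⟩ := hadj
      · have huv : (u : ℕ) < (v : ℕ) := by
          rcases Nat.lt_or_ge (u : ℕ) (v : ℕ) with h' | h'
          · exact h'
          · exfalso; have h0 := hp.2.2 _ hd; omega
        exact key u v huv hd
      · have hvu : (v : ℕ) < (u : ℕ) := by
          rcases Nat.lt_or_ge (v : ℕ) (u : ℕ) with h' | h'
          · exact h'
          · exfalso; have h0 := hp.2.2 _ hd; omega
        exact (key v u hvu hd).symm
    obtain ⟨w⟩ := h
    induction w with
    | nil => exact SimpleGraph.Reachable.refl _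
    | cons hadj w ih => exact (step _ _ hadj).trans ih
  · intro h
    refine h.mono ?_
    intro u v huv
    exact ⟨huv.1, huv.2.imp (fun h' => (List.erase_sublist).mem h')
      (fun h' => (List.erase_sublist).mem h')⟩

end FirstRed

theorem first_reduction (p : List ℕ) (hp : OFS p) (a b : ℕ)
    (ha : a ∈ p) (hb : b ∈ p) (hab : a ≠ b) (hdvd : a ∣ b)
    (q : List ℕ) (hq : q = p.erase b) :
    (∀ k : ℕ, 1 ≤ k → ∀ i j : Fin k, (G p k).Reachable i j ↔ (G q k).Reachable i j) ∧
    fw p = fw q := by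
  subst hq
  constructor
  · intro k _ i j
    exact FirstRed.graph_part p hp a b ha hb hab hdvd k i j
  · exact FirstRed.fw_main p.length p a b le_rfl hp ha hb hab hdvd
end
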